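/- arXiv:1611.06135 — 5 statements merged into one kernel-verified Lean document; each statement's English description precedes it below -/
import Mathlib

section
/- If G is a connected graph of order n ≥ 6 in which every vertex has degree at most 3 and n ≡ 0 (mod 4), then C(G) ≤ 7/12 + 1/n. -/
namespace ClusterCoeff

/-- The degree of a vertex. -/
noncomputable def deg {V : Type*} (G : SimpleGraph V) (u : V) : ℕ :=
  Nat.card (G.neighborSet u)

/-- The number of edges of the subgraph induced by the neighborhood of `u`. -/
noncomputable def nbrE {V : Type*} (G : SimpleGraph V) (u : V) : ℕ :=
  Nat.card {p : G.neighborSet u × G.neighborSet u // G.Adj p.1 p.2} / 2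

/-- The clustering coefficient of the vertex `u`. -/
noncomputable def localCC {V : Type*} (G : SimpleGraph V) (u : V) : ℝ :=
  if 2 ≤ deg G u then (nbrE G u : ℝ) / ((deg G u).choose 2) else 0

/-- The clustering coefficient of the graph `G`. -/
noncomputable def cc {V : Type*} [Fintype V] (G : SimpleGraph V) : ℝ :=
  (∑ u, localCC G u) / (Fintype.card V)

/-- The complete graph on `n` vertices minus the edge between vertices `0` and `1`. -/
def Kminus (n : ℕ) [NeZero n] : SimpleGraph (Fin n) where
  Adj a b := a ≠ b ∧ ¬((a = 0 ∧ b = 1) ∨ (a = 1 ∧ b = 0))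
  symm := by
    constructor
    intro a b h
    obtain ⟨h1, h2⟩ := h
    exact ⟨h1.symm, by tauto⟩
  loopless := by
    constructor
    intro a h
    exact h.1 rfl

/-- The graph obtained from `G` by adding the edge `uv`. -/
def addEdge {V : Type*} (G : SimpleGraph V) (u v : V) : SimpleGraph V where
  Adj a b := a ≠ b ∧ (G.Adj a b ∨ (a = u ∧ b = v) ∨ (a = v ∧ b = u))
  symm := by
    constructor
    intro a b h
    obtain ⟨h1, h2⟩ := h
    refine ⟨h1.symm, ?_⟩
    rcases h2 with h | h | h
    · exact Or.inl h.symm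
    · exact Or.inr (Or.inr ⟨h.2, h.1⟩)
    · exact Or.inr (Or.inl ⟨h.2, h.1⟩)
  loopless := by
    constructor
    intro a h
    exact h.1 rfl

/-- The graph obtained from `G` by deleting the edge `uv`. -/
def delEdge {V : Type*} (G : SimpleGraph V) (u v : V) : SimpleGraph V where
  Adj a b := G.Adj a b ∧ ¬((a = u ∧ b = v) ∨ (a = v ∧ b = u))
  symm := by
    constructor
    intro a b h
    exact ⟨h.1.symm, by tauto⟩
  loopless := by
    constructor
    intro a h
    exact G.loopless.irrefl a h.1

/-- The modified connected caveman graph `G(k,ℓ)`: `ℓ` copies of `K_{k+1} - e` arranged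
cyclically, with one edge between consecutive copies, chosen so that the graph is
`k`-regular (the two degree-deficient vertices `0` and `1` of each copy receive
the connecting edges). -/
def cave (k ℓ : ℕ) : SimpleGraph (ZMod ℓ × Fin (k + 1)) where
  Adj v w := v ≠ w ∧
    ((v.1 = w.1 ∧ v.2 ≠ w.2 ∧ ¬((v.2 = 0 ∧ w.2 = 1) ∨ (v.2 = 1 ∧ w.2 = 0))) ∨
     (w.1 = v.1 + 1 ∧ v.2 = 0 ∧ w.2 = 1) ∨
     (v.1 = w.1 + 1 ∧ w.2 = 0 ∧ v.2 = 1))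
  symm := by
    constructor
    intro v w h
    obtain ⟨h0, h⟩ := h
    refine ⟨h0.symm, ?_⟩
    rcases h with ⟨h1, h2, h3⟩ | ⟨h1, h2, h3⟩ | ⟨h1, h2, h3⟩
    · exact Or.inl ⟨h1.symm, h2.symm, by tauto⟩
    · exact Or.inr (Or.inr ⟨h1, h2, h3⟩)
    · exact Or.inr (Or.inl ⟨h1, h2, h3⟩)
  loopless := by
    constructor
    intro v h
    exact h.1 rfl


section Aux
set_option linter.unusedSectionVars false
set_option linter.unusedVariables false
set_option maxHeartbeats 1000000

variable {V : Type*} [Fintype V] [DecidableEq V] {G : SimpleGraph V} [DecidableRel G.Adj]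

lemma deg_eq (u : V) : deg G u = G.degree u := by
  rw [deg, Nat.card_eq_fintype_card, SimpleGraph.card_neighborSet_eq_degree]

noncomputable def mw (G : SimpleGraph V) (u : V) : ℕ :=
  if deg G u = 2 then 3 * nbrE G u else if deg G u = 3 then nbrE G u else 0

lemma mw_cast {u : V} (h : deg G u ≤ 3) : (mw G u : ℝ) = 3 * localCC G u := by
  rw [mw, localCC]
  interval_cases hd : deg G u <;> norm_num
  ring

-- helpers on neighborhoods
lemma two_le_degree {u a b : V} (ha : G.Adj u a) (hb : G.Adj u b) (hab : a ≠ b) :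
    2 ≤ G.degree u := by
  rw [← SimpleGraph.card_neighborFinset_eq_degree]
  have : ({a, b} : Finset V) ⊆ G.neighborFinset u := by
    intro x hx
    simp only [Finset.mem_insert, Finset.mem_singleton] at hx
    rcases hx with rfl | rfl <;> simp [SimpleGraph.mem_neighborFinset, ha, hb]
  calc 2 = ({a, b} : Finset V).card := by rw [Finset.card_insert_of_notMem (by simp [hab]),
        Finset.card_singleton]
  _ ≤ _ := Finset.card_le_card this

lemma nbr_eq_of_two {u a b : V} (hd : G.degree u = 2) (ha : G.Adj u a) (hb : G.Adj u b)
    (hab : a ≠ b) : G.neighborFinset u = {a, b} := by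
  symm
  apply Finset.eq_of_subset_of_card_le
  · intro x hx
    simp only [Finset.mem_insert, Finset.mem_singleton] at hx
    rcases hx with rfl | rfl <;> simp [SimpleGraph.mem_neighborFinset, ha, hb]
  · rw [SimpleGraph.card_neighborFinset_eq_degree, hd,
      Finset.card_insert_of_notMem (by simp [hab]), Finset.card_singleton]

lemma nbr_eq_of_three {u a b c : V} (hdeg : ∀ v, G.degree v ≤ 3)
    (ha : G.Adj u a) (hb : G.Adj u b) (hc : G.Adj u c)
    (hab : a ≠ b) (hac : a ≠ c) (hbc : b ≠ c) : G.neighborFinset u = {a, b, c} := by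
  symm
  apply Finset.eq_of_subset_of_card_le
  · intro x hx
    simp only [Finset.mem_insert, Finset.mem_singleton] at hx
    rcases hx with rfl | rfl | rfl <;> simp [SimpleGraph.mem_neighborFinset, ha, hb, hc]
  · rw [SimpleGraph.card_neighborFinset_eq_degree]
    calc G.degree u ≤ 3 := hdeg u
    _ = _ := by
        rw [Finset.card_insert_of_notMem (by simp [hab, hac]),
          Finset.card_insert_of_notMem (by simp [hbc]), Finset.card_singleton]

lemma degree_eq_three_of_three {u a b c : V} (hdeg : ∀ v, G.degree v ≤ 3)
    (ha : G.Adj u a) (hb : G.Adj u b) (hc : G.Adj u c)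
    (hab : a ≠ b) (hac : a ≠ c) (hbc : b ≠ c) : G.degree u = 3 := by
  rw [← SimpleGraph.card_neighborFinset_eq_degree, nbr_eq_of_three hdeg ha hb hc hab hac hbc,
    Finset.card_insert_of_notMem (by simp [hab, hac]),
    Finset.card_insert_of_notMem (by simp [hbc]), Finset.card_singleton]

lemma third_nbr {u a b : V} (hd : G.degree u = 3) (ha : G.Adj u a) (hb : G.Adj u b)
    (hab : a ≠ b) : ∃ w, w ≠ a ∧ w ≠ b ∧ G.Adj u w ∧ G.neighborFinset u = {a, b, w} := by
  have hsub : ({a, b} : Finset V) ⊆ G.neighborFinset u := by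
    intro x hx
    simp only [Finset.mem_insert, Finset.mem_singleton] at hx
    rcases hx with rfl | rfl <;> simp [SimpleGraph.mem_neighborFinset, ha, hb]
  have hcard2 : ({a, b} : Finset V).card = 2 := by
    rw [Finset.card_insert_of_notMem (by simp [hab]), Finset.card_singleton]
  have hdiff : (G.neighborFinset u \ {a, b}).card = 1 := by
    rw [Finset.card_sdiff_of_subset hsub, SimpleGraph.card_neighborFinset_eq_degree, hd, hcard2]
  obtain ⟨w, hw⟩ := Finset.card_eq_one.mp hdiff
  have hwmem : w ∈ G.neighborFinset u \ {a, b} := hw ▸ Finset.mem_singleton_self w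
  rw [Finset.mem_sdiff, Finset.mem_insert, Finset.mem_singleton] at hwmem
  push_neg at hwmem
  refine ⟨w, hwmem.2.1, hwmem.2.2, (SimpleGraph.mem_neighborFinset _ _ _).mp hwmem.1, ?_⟩
  symm
  apply Finset.eq_of_subset_of_card_le
  · intro x hx
    simp only [Finset.mem_insert, Finset.mem_singleton] at hx
    rcases hx with rfl | rfl | rfl <;>
      simp [SimpleGraph.mem_neighborFinset, ha, hb, hwmem.1, SimpleGraph.mem_neighborFinset _ _ _ |>.mp hwmem.1]
  · rw [SimpleGraph.card_neighborFinset_eq_degree, hd,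
      Finset.card_insert_of_notMem (by simp [hab, Ne.symm hwmem.2.1]),
      Finset.card_insert_of_notMem (by simp [Ne.symm hwmem.2.2]), Finset.card_singleton]


def E2 (G : SimpleGraph V) [DecidableRel G.Adj] (u : V) : ℕ :=
  ((G.neighborFinset u ×ˢ G.neighborFinset u).filter fun p => G.Adj p.1 p.2).card

lemma nbrE_eq (u : V) : nbrE G u = E2 G u / 2 := by
  have h : Nat.card {p : G.neighborSet u × G.neighborSet u // G.Adj p.1 p.2} = E2 G u := by
    rw [Nat.card_eq_fintype_card, E2, ← Fintype.card_coe]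
    apply Fintype.card_congr
    refine ⟨fun p => ⟨(p.1.1, p.1.2), ?_⟩, fun q => ⟨(⟨q.1.1, ?_⟩, ⟨q.1.2, ?_⟩), ?_⟩, ?_, ?_⟩
    · simp only [Finset.mem_filter, Finset.mem_product, SimpleGraph.mem_neighborFinset]
      exact ⟨⟨p.1.1.2, p.1.2.2⟩, p.2⟩
    · have := q.2
      simp only [Finset.mem_filter, Finset.mem_product, SimpleGraph.mem_neighborFinset] at this
      exact this.1.1
    · have := q.2
      simp only [Finset.mem_filter, Finset.mem_product, SimpleGraph.mem_neighborFinset] at this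
      exact this.1.2
    · have := q.2
      simp only [Finset.mem_filter, Finset.mem_product, SimpleGraph.mem_neighborFinset] at this
      exact this.2
    · intro p; rfl
    · intro q; rfl
  rw [nbrE, h]


lemma E2_pair {u a b : V} (h : G.neighborFinset u = {a, b}) (hab : G.Adj a b) :
    E2 G u = 2 := by
  have hne : a ≠ b := hab.ne
  have : ((G.neighborFinset u ×ˢ G.neighborFinset u).filter fun p => G.Adj p.1 p.2)
      = {(a, b), (b, a)} := by
    ext ⟨x, y⟩
    simp only [Finset.mem_filter, Finset.mem_product, h, Finset.mem_insert,
      Finset.mem_singleton, Prod.mk.injEq]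
    constructor
    · rintro ⟨⟨hx | hx, hy | hy⟩, hadj⟩ <;> subst hx <;> subst hy <;>
        first | (exact absurd hadj (G.loopless.irrefl _)) | tauto
    · rintro (⟨rfl, rfl⟩ | ⟨rfl, rfl⟩) <;> simp [hab, hab.symm]
  rw [E2, this]
  rw [Finset.card_insert_of_notMem (by simp [Prod.ext_iff, hne]), Finset.card_singleton]

lemma E2_three_one {u a b c : V} (h : G.neighborFinset u = {a, b, c})
    (hab : G.Adj a b) (hac : ¬ G.Adj a c) (hbc : ¬ G.Adj b c) :
    E2 G u = 2 := by
  have hne : a ≠ b := hab.ne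
  have : ((G.neighborFinset u ×ˢ G.neighborFinset u).filter fun p => G.Adj p.1 p.2)
      = {(a, b), (b, a)} := by
    ext ⟨x, y⟩
    simp only [Finset.mem_filter, Finset.mem_product, h, Finset.mem_insert,
      Finset.mem_singleton, Prod.mk.injEq]
    constructor
    · rintro ⟨⟨hx | hx | hx, hy | hy | hy⟩, hadj⟩ <;> subst hx <;> subst hy <;>
        first
          | (exact absurd hadj (G.loopless.irrefl _))
          | (exact absurd hadj hac) | (exact absurd hadj hbc)
          | (exact absurd hadj.symm hac) | (exact absurd hadj.symm hbc)
          | tauto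
    · rintro (⟨rfl, rfl⟩ | ⟨rfl, rfl⟩) <;> simp [hab, hab.symm]
  rw [E2, this]
  rw [Finset.card_insert_of_notMem (by simp [Prod.ext_iff, hne]), Finset.card_singleton]

lemma E2_three_two {u a b c : V} (h : G.neighborFinset u = {a, b, c})
    (hab : G.Adj a b) (hac : G.Adj a c) (hne3 : b ≠ c) (hbc : ¬ G.Adj b c) :
    E2 G u = 4 := by
  have hne1 : a ≠ b := hab.ne
  have hne2 : a ≠ c := hac.ne
  have : ((G.neighborFinset u ×ˢ G.neighborFinset u).filter fun p => G.Adj p.1 p.2)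
      = {(a, b), (b, a), (a, c), (c, a)} := by
    ext ⟨x, y⟩
    simp only [Finset.mem_filter, Finset.mem_product, h, Finset.mem_insert,
      Finset.mem_singleton, Prod.mk.injEq]
    constructor
    · rintro ⟨⟨hx | hx | hx, hy | hy | hy⟩, hadj⟩ <;> subst hx <;> subst hy <;>
        first
          | (exact absurd hadj (G.loopless.irrefl _))
          | (exact absurd hadj hbc)
          | (exact absurd hadj.symm hbc)
          | tauto
    · rintro (⟨rfl, rfl⟩ | ⟨rfl, rfl⟩ | ⟨rfl, rfl⟩ | ⟨rfl, rfl⟩) <;>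
        simp [hab, hab.symm, hac, hac.symm]
  rw [E2, this]
  rw [Finset.card_insert_of_notMem (by simp [Prod.ext_iff, hne1, hne2, hne3]),
    Finset.card_insert_of_notMem (by simp [Prod.ext_iff, hne1, hne2, hne3, hne1.symm]),
    Finset.card_insert_of_notMem (by simp [Prod.ext_iff, hne2, hne3]), Finset.card_singleton]


def isTri (G : SimpleGraph V) (T : Finset V) : Prop :=
  ∃ p q r : V, T = {p, q, r} ∧ p ≠ q ∧ p ≠ r ∧ q ≠ r ∧ G.Adj p q ∧ G.Adj p r ∧ G.Adj q r

def isDia (G : SimpleGraph V) (D : Finset V) : Prop :=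
  ∃ a b x z : V, D = {a, b, x, z} ∧ a ≠ b ∧ a ≠ x ∧ a ≠ z ∧ b ≠ x ∧ b ≠ z ∧ x ≠ z ∧
    G.Adj a b ∧ G.Adj a x ∧ G.Adj a z ∧ G.Adj b x ∧ G.Adj b z ∧ ¬ G.Adj x z

def isSingle (G : SimpleGraph V) (T : Finset V) : Prop :=
  isTri G T ∧ ∀ D, isDia G D → ¬ T ⊆ D

lemma isDia_card {D : Finset V} (h : isDia G D) : D.card = 4 := by
  obtain ⟨a, b, x, z, rfl, h1, h2, h3, h4, h5, h6, -⟩ := h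
  rw [Finset.card_insert_of_notMem (by simp [h1, h2, h3]),
    Finset.card_insert_of_notMem (by simp [h4, h5]),
    Finset.card_insert_of_notMem (by simp [h6]), Finset.card_singleton]

lemma isTri_card {T : Finset V} (h : isTri G T) : T.card = 3 := by
  obtain ⟨p, q, r, rfl, h1, h2, h3, -⟩ := h
  rw [Finset.card_insert_of_notMem (by simp [h1, h2]),
    Finset.card_insert_of_notMem (by simp [h3]), Finset.card_singleton]

lemma walk_closure {S : Finset V} (hcl : ∀ v ∈ S, ∀ w, G.Adj v w → w ∈ S) :
    ∀ (x y : V) (_ : G.Walk x y), x ∈ S → y ∈ S := by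
  intro x y p
  induction p with
  | nil => exact id
  | cons h p ih => exact fun hx => ih (hcl _ hx _ h)

lemma closure_univ (hconn : G.Connected) {S : Finset V} (hne : S.Nonempty)
    (hcl : ∀ v ∈ S, ∀ w, G.Adj v w → w ∈ S) : ∀ w, w ∈ S := by
  obtain ⟨v0, hv0⟩ := hne
  intro w
  obtain ⟨p⟩ := hconn.preconnected v0 w
  exact walk_closure hcl v0 w p hv0

lemma no_K4 (hconn : G.Connected) (hdeg : ∀ v, G.degree v ≤ 3) (hn : 6 ≤ Fintype.card V)
    {a b x z : V} (hab : a ≠ b) (hax : a ≠ x) (haz : a ≠ z) (hbx : b ≠ x) (hbz : b ≠ z)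
    (hxz : x ≠ z) (Aab : G.Adj a b) (Aax : G.Adj a x) (Aaz : G.Adj a z)
    (Abx : G.Adj b x) (Abz : G.Adj b z) (Axz : G.Adj x z) : False := by
  set S : Finset V := {a, b, x, z} with hS
  have hcl : ∀ v ∈ S, ∀ w, G.Adj v w → w ∈ S := by
    intro v hv w hw
    simp only [hS, Finset.mem_insert, Finset.mem_singleton] at hv ⊢
    rcases hv with rfl | rfl | rfl | rfl
    · have := nbr_eq_of_three hdeg Aab Aax Aaz hbx hbz hxz
      have hw' : w ∈ G.neighborFinset v := by simpa [SimpleGraph.mem_neighborFinset] using hw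
      rw [this] at hw'; simp at hw'; tauto
    · have := nbr_eq_of_three hdeg Aab.symm Abx Abz hax haz hxz
      have hw' : w ∈ G.neighborFinset v := by simpa [SimpleGraph.mem_neighborFinset] using hw
      rw [this] at hw'; simp at hw'; tauto
    · have := nbr_eq_of_three hdeg Aax.symm Abx.symm Axz hab haz hbz
      have hw' : w ∈ G.neighborFinset v := by simpa [SimpleGraph.mem_neighborFinset] using hw
      rw [this] at hw'; simp at hw'; tauto
    · have := nbr_eq_of_three hdeg Aaz.symm Abz.symm Axz.symm hab hax hbx
      have hw' : w ∈ G.neighborFinset v := by simpa [SimpleGraph.mem_neighborFinset] using hw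
      rw [this] at hw'; simp at hw'; tauto
  have huniv : (Finset.univ : Finset V) ⊆ S := fun w _ =>
    closure_univ hconn ⟨a, by simp [hS]⟩ hcl w
  have : Fintype.card V ≤ 4 := by
    calc Fintype.card V = (Finset.univ : Finset V).card := (Finset.card_univ).symm
    _ ≤ S.card := Finset.card_le_card huniv
    _ ≤ 4 := by
        simp only [hS]
        apply le_trans (Finset.card_insert_le _ _)
        apply Nat.succ_le_succ
        apply le_trans (Finset.card_insert_le _ _)
        apply Nat.succ_le_succ
        apply le_trans (Finset.card_insert_le _ _)
        simp
  omega

lemma tri_mem_labels {T : Finset V} (hT : isTri G T) {v : V} (hv : v ∈ T) :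
    ∃ y z, T = {v, y, z} ∧ v ≠ y ∧ v ≠ z ∧ y ≠ z ∧ G.Adj v y ∧ G.Adj v z ∧ G.Adj y z := by
  obtain ⟨p, q, r, rfl, h1, h2, h3, a1, a2, a3⟩ := hT
  simp only [Finset.mem_insert, Finset.mem_singleton] at hv
  rcases hv with rfl | rfl | rfl
  · exact ⟨q, r, rfl, h1, h2, h3, a1, a2, a3⟩
  · exact ⟨p, r, by ext; simp; tauto, h1.symm, h3, h2, a1.symm, a3, a2⟩
  · exact ⟨p, q, by ext; simp; tauto, h2.symm, h3.symm, h1, a2.symm, a3.symm, a1⟩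


/-- If `x` is a pendant vertex of a diamond `{a,b,x,z}` (centers `a,b`), then any
triangle through `x` has its other two vertices among `{a,b}`. -/
lemma dia_pendant_claim (hdeg : ∀ v, G.degree v ≤ 3)
    {a b x z : V} (hab : a ≠ b) (hax : a ≠ x) (haz : a ≠ z) (hbx : b ≠ x) (hbz : b ≠ z)
    (hxz : x ≠ z) (Aab : G.Adj a b) (Aax : G.Adj a x) (Aaz : G.Adj a z)
    (Abx : G.Adj b x) (Abz : G.Adj b z) (Axz : ¬ G.Adj x z) :
    ∀ p q : V, G.Adj x p → G.Adj x q → G.Adj p q → p = a ∨ p = b := by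
  have hNa : G.neighborFinset a = {b, x, z} := nbr_eq_of_three hdeg Aab Aax Aaz hbx hbz hxz
  have hNb : G.neighborFinset b = {a, x, z} := nbr_eq_of_three hdeg Aab.symm Abx Abz hax haz hxz
  intro p q hxp hxq hpq
  by_contra hp
  push_neg at hp
  obtain ⟨hpa, hpb⟩ := hp
  have hNx : G.neighborFinset x = {a, b, p} :=
    nbr_eq_of_three hdeg Aax.symm Abx.symm hxp hab (Ne.symm hpa) (Ne.symm hpb)
  have hq : q ∈ G.neighborFinset x := by simpa [SimpleGraph.mem_neighborFinset] using hxq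
  rw [hNx] at hq
  simp only [Finset.mem_insert, Finset.mem_singleton] at hq
  have hqp : q ≠ p := fun h => G.loopless.irrefl p (h ▸ hpq.symm : G.Adj p p)
  rcases hq with rfl | rfl | rfl
  · -- q = a, so p ∈ N(a) = {b,x,z}
    have hpmem : p ∈ G.neighborFinset q := by
      simpa [SimpleGraph.mem_neighborFinset] using hpq.symm
    rw [hNa] at hpmem
    simp only [Finset.mem_insert, Finset.mem_singleton] at hpmem
    rcases hpmem with rfl | rfl | rfl
    · exact hpb rfl
    · exact G.loopless.irrefl _ hxp
    · exact Axz hxp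
  · have hpmem : p ∈ G.neighborFinset q := by
      simpa [SimpleGraph.mem_neighborFinset] using hpq.symm
    rw [hNb] at hpmem
    simp only [Finset.mem_insert, Finset.mem_singleton] at hpmem
    rcases hpmem with rfl | rfl | rfl
    · exact hpa rfl
    · exact G.loopless.irrefl _ hxp
    · exact Axz hxp
  · exact hqp rfl

/-- Any triangle through a vertex of a diamond is contained in the diamond. -/
lemma dia_adj_pair (hdeg : ∀ v, G.degree v ≤ 3) {D : Finset V} (hD : isDia G D)
    {v p q : V} (hv : v ∈ D) (hvp : G.Adj v p) (hvq : G.Adj v q) (hpq : G.Adj p q) :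
    p ∈ D ∧ q ∈ D := by
  obtain ⟨a, b, x, z, rfl, hab, hax, haz, hbx, hbz, hxz, Aab, Aax, Aaz, Abx, Abz, Axz⟩ := hD
  simp only [Finset.mem_insert, Finset.mem_singleton] at hv ⊢
  rcases hv with rfl | rfl | rfl | rfl
  · have hN : G.neighborFinset v = {b, x, z} := nbr_eq_of_three hdeg Aab Aax Aaz hbx hbz hxz
    have hp : p ∈ G.neighborFinset v := by simpa [SimpleGraph.mem_neighborFinset] using hvp
    have hq : q ∈ G.neighborFinset v := by simpa [SimpleGraph.mem_neighborFinset] using hvq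
    rw [hN] at hp hq; simp at hp hq; tauto
  · have hN : G.neighborFinset v = {a, x, z} := nbr_eq_of_three hdeg Aab.symm Abx Abz hax haz hxz
    have hp : p ∈ G.neighborFinset v := by simpa [SimpleGraph.mem_neighborFinset] using hvp
    have hq : q ∈ G.neighborFinset v := by simpa [SimpleGraph.mem_neighborFinset] using hvq
    rw [hN] at hp hq; simp at hp hq; tauto
  · have hcl := dia_pendant_claim hdeg hab hax haz hbx hbz hxz Aab Aax Aaz Abx Abz Axz
    have h1 := hcl p q hvp hvq hpq
    have h2 := hcl q p hvq hvp hpq.symm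
    tauto
  · have hcl := dia_pendant_claim hdeg hab haz hax hbz hbx (Ne.symm hxz) Aab Aaz Aax Abz Abx
      (fun h => Axz h.symm)
    have h1 := hcl p q hvp hvq hpq
    have h2 := hcl q p hvq hvp hpq.symm
    tauto

lemma dia_eq_of_mem (hdeg : ∀ v, G.degree v ≤ 3) {D1 D2 : Finset V}
    (h1 : isDia G D1) (h2 : isDia G D2) {v : V} (hv1 : v ∈ D1) (hv2 : v ∈ D2) : D1 = D2 := by
  obtain ⟨a, b, x, z, hD2, hab, hax, haz, hbx, hbz, hxz, Aab, Aax, Aaz, Abx, Abz, Axz⟩ := h2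
  subst hD2
  have hsub : ({a, b, x, z} : Finset V) ⊆ D1 := by
    have key : a ∈ D1 ∧ b ∈ D1 ∧ x ∈ D1 ∧ z ∈ D1 := by
      simp only [Finset.mem_insert, Finset.mem_singleton] at hv2
      rcases hv2 with rfl | rfl | rfl | rfl
      · obtain ⟨hb, hx⟩ := dia_adj_pair hdeg h1 hv1 Aab Aax Abx
        obtain ⟨-, hz⟩ := dia_adj_pair hdeg h1 hv1 Aab Aaz Abz
        exact ⟨hv1, hb, hx, hz⟩
      · obtain ⟨ha, hx⟩ := dia_adj_pair hdeg h1 hv1 Aab.symm Abx Aax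
        obtain ⟨-, hz⟩ := dia_adj_pair hdeg h1 hv1 Aab.symm Abz Aaz
        exact ⟨ha, hv1, hx, hz⟩
      · obtain ⟨ha, hb⟩ := dia_adj_pair hdeg h1 hv1 Aax.symm Abx.symm Aab
        obtain ⟨-, hz⟩ := dia_adj_pair hdeg h1 ha Aab Aaz Abz
        exact ⟨ha, hb, hv1, hz⟩
      · obtain ⟨ha, hb⟩ := dia_adj_pair hdeg h1 hv1 Aaz.symm Abz.symm Aab
        obtain ⟨-, hx⟩ := dia_adj_pair hdeg h1 ha Aab Aax Abx
        exact ⟨ha, hb, hx, hv1⟩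
    intro w hw
    simp only [Finset.mem_insert, Finset.mem_singleton] at hw
    rcases hw with rfl | rfl | rfl | rfl
    exacts [key.1, key.2.1, key.2.2.1, key.2.2.2]
  have hc1 : D1.card = 4 := isDia_card h1
  have hc2 : ({a, b, x, z} : Finset V).card = 4 := isDia_card ⟨a, b, x, z, rfl, hab, hax, haz,
    hbx, hbz, hxz, Aab, Aax, Aaz, Abx, Abz, Axz⟩
  exact (Finset.eq_of_subset_of_card_le hsub (by omega)).symm

lemma single_dia_not_mem (hdeg : ∀ v, G.degree v ≤ 3) {T D : Finset V}
    (hT : isSingle G T) (hD : isDia G D) {v : V} (hvT : v ∈ T) (hvD : v ∈ D) : False := by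
  obtain ⟨y, w, hTeq, h1, h2, h3, a1, a2, a3⟩ := tri_mem_labels hT.1 hvT
  obtain ⟨hy, hw⟩ := dia_adj_pair hdeg hD hvD a1 a2 a3
  refine hT.2 D hD ?_
  rw [hTeq]
  intro t ht
  simp only [Finset.mem_insert, Finset.mem_singleton] at ht
  rcases ht with rfl | rfl | rfl
  exacts [hvD, hy, hw]

/-- From two triangles sharing the edge `v`–`A`, we get a diamond (or `K4`, impossible). -/
lemma shared_edge_diamond (hconn : G.Connected) (hdeg : ∀ v, G.degree v ≤ 3)
    (hn : 6 ≤ Fintype.card V) {v A B t : V}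
    (hvA : G.Adj v A) (hvB : G.Adj v B) (hAB : G.Adj A B)
    (hvt : G.Adj v t) (hAt : G.Adj A t) (hBt : B ≠ t) :
    ∃ D, isDia G D ∧ v ∈ D ∧ A ∈ D ∧ B ∈ D := by
  by_cases hadj : G.Adj B t
  · exact absurd (no_K4 hconn hdeg hn hvA.ne hvB.ne hvt.ne hAB.ne hAt.ne hBt
      hvA hvB hvt hAB hAt hadj) id
  · refine ⟨{v, A, B, t}, ⟨v, A, B, t, rfl, hvA.ne, hvB.ne, hvt.ne, hAB.ne, hAt.ne, hBt,
      hvA, hvB, hvt, hAB, hAt, hadj⟩, by simp, by simp, by simp⟩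

lemma single_single (hconn : G.Connected) (hdeg : ∀ v, G.degree v ≤ 3)
    (hn : 6 ≤ Fintype.card V) {T1 T2 : Finset V}
    (h1 : isSingle G T1) (h2 : isSingle G T2) (hne : T1 ≠ T2) {v : V}
    (hv1 : v ∈ T1) (hv2 : v ∈ T2) : False := by
  obtain ⟨p, q, hT1, n1, n2, n3, a1, a2, a3⟩ := tri_mem_labels h1.1 hv1
  obtain ⟨s, t, hT2, m1, m2, m3, b1, b2, b3⟩ := tri_mem_labels h2.1 hv2
  have habs : ∀ (A B C : V), T1 = {v, A, B} → G.Adj v A → G.Adj v B → G.Adj A B →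
      G.Adj v C → G.Adj A C → B ≠ C → False := by
    intro A B C hT hA hB hAB hC hAC hBC
    obtain ⟨D, hD, hvD, hAD, hBD⟩ := shared_edge_diamond hconn hdeg hn hA hB hAB hC hAC hBC
    refine h1.2 D hD ?_
    rw [hT]
    intro w hw
    simp only [Finset.mem_insert, Finset.mem_singleton] at hw
    rcases hw with rfl | rfl | rfl
    exacts [hvD, hAD, hBD]
  -- case analysis on overlaps
  by_cases hps : p = s
  · have hqt : q ≠ t := by
      intro h
      exact hne (hT1.trans (by rw [hT2, hps, h]))
    have hpt' : G.Adj p t := by rw [hps]; exact b3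
    exact habs p q t hT1 a1 a2 a3 b2 hpt' hqt
  · by_cases hpt : p = t
    · have hqs : q ≠ s := by
        intro h
        refine hne (hT1.trans ?_)
        rw [hT2, hpt, h]
        ext w; simp; tauto
      have hps' : G.Adj p s := by rw [hpt]; exact b3.symm
      exact habs p q s hT1 a1 a2 a3 b1 hps' hqs
    · by_cases hqs : q = s
      · have hqt' : G.Adj q t := by rw [hqs]; exact b3
        exact habs q p t (by rw [hT1]; ext w; simp; tauto) a2 a1 a3.symm b2 hqt' hpt
      · by_cases hqt : q = t
        · have hqs' : G.Adj q s := by rw [hqt]; exact b3.symm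
          exact habs q p s (by rw [hT1]; ext w; simp; tauto) a2 a1 a3.symm b1 hqs' hps
        · -- all distinct: degree of v ≥ 4
          have hsub : ({p, q, s, t} : Finset V) ⊆ G.neighborFinset v := by
            intro w hw
            simp only [Finset.mem_insert, Finset.mem_singleton] at hw
            rcases hw with rfl | rfl | rfl | rfl <;>
              simp [SimpleGraph.mem_neighborFinset, a1, a2, b1, b2]
          have hcard : ({p, q, s, t} : Finset V).card = 4 := by
            rw [Finset.card_insert_of_notMem (by simp [n3, hps, hpt]),
              Finset.card_insert_of_notMem (by simp [hqs, hqt]),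
              Finset.card_insert_of_notMem (by simp [m3]), Finset.card_singleton]
          have := Finset.card_le_card hsub
          rw [hcard, SimpleGraph.card_neighborFinset_eq_degree] at this
          exact absurd (le_trans this (hdeg v)) (by omega)
  
lemma not_all_deg_two (hconn : G.Connected) (hn : 6 ≤ Fintype.card V) {T : Finset V}
    (hT : isTri G T) (hall : ∀ v ∈ T, G.degree v = 2) : False := by
  obtain ⟨p, q, r, rfl, h1, h2, h3, a1, a2, a3⟩ := hT
  have hcl : ∀ v ∈ ({p, q, r} : Finset V), ∀ w, G.Adj v w → w ∈ ({p, q, r} : Finset V) := by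
    intro v hv w hw
    simp only [Finset.mem_insert, Finset.mem_singleton] at hv ⊢
    have hd := hall v (by simp only [Finset.mem_insert, Finset.mem_singleton]; exact hv)
    rcases hv with rfl | rfl | rfl
    · have hN := nbr_eq_of_two hd a1 a2 h3
      have : w ∈ G.neighborFinset v := by simpa [SimpleGraph.mem_neighborFinset] using hw
      rw [hN] at this; simp at this; tauto
    · have hN := nbr_eq_of_two hd a1.symm a3 h2
      have : w ∈ G.neighborFinset v := by simpa [SimpleGraph.mem_neighborFinset] using hw
      rw [hN] at this; simp at this; tauto
    · have hN := nbr_eq_of_two hd a2.symm a3.symm h1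
      have : w ∈ G.neighborFinset v := by simpa [SimpleGraph.mem_neighborFinset] using hw
      rw [hN] at this; simp at this; tauto
  have huniv : (Finset.univ : Finset V) ⊆ {p, q, r} := fun w _ =>
    closure_univ hconn ⟨p, by simp⟩ hcl w
  have : Fintype.card V ≤ 3 := by
    calc Fintype.card V = (Finset.univ : Finset V).card := (Finset.card_univ).symm
    _ ≤ ({p, q, r} : Finset V).card := Finset.card_le_card huniv
    _ ≤ 3 := by
        apply le_trans (Finset.card_insert_le _ _)
        apply Nat.succ_le_succ
        apply le_trans (Finset.card_insert_le _ _)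
        simp
  omega

lemma obj_disjoint (hconn : G.Connected) (hdeg : ∀ v, G.degree v ≤ 3)
    (hn : 6 ≤ Fintype.card V) {S1 S2 : Finset V}
    (h1 : isDia G S1 ∨ isSingle G S1) (h2 : isDia G S2 ∨ isSingle G S2) (hne : S1 ≠ S2) :
    Disjoint S1 S2 := by
  rw [Finset.disjoint_left]
  intro v hv1 hv2
  rcases h1 with h1 | h1 <;> rcases h2 with h2 | h2
  · exact hne (dia_eq_of_mem hdeg h1 h2 hv1 hv2)
  · exact single_dia_not_mem hdeg h2 h1 hv2 hv1
  · exact single_dia_not_mem hdeg h1 h2 hv1 hv2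
  · exact single_single hconn hdeg hn h1 h2 hne hv1 hv2


-- NEW MATERIAL

lemma mw_eq_two {u : V} (hd : G.degree u = 3) (hE : E2 G u = 4) : mw G u = 2 := by
  rw [mw, deg_eq, hd, nbrE_eq, hE]; norm_num

lemma mw_eq_one {u : V} (hd : G.degree u = 3) (hE : E2 G u = 2) : mw G u = 1 := by
  rw [mw, deg_eq, hd, nbrE_eq, hE]; norm_num

lemma mw_eq_three {u : V} (hd : G.degree u = 2) (hE : E2 G u = 2) : mw G u = 3 := by
  rw [mw, deg_eq, hd, nbrE_eq, hE]; norm_num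

lemma dia_pendant_f (hdeg : ∀ v, G.degree v ≤ 3) {D : Finset V}
    {a b x z : V} (hDeq : D = {a, b, x, z})
    (hab : a ≠ b) (hax : a ≠ x) (haz : a ≠ z) (hbx : b ≠ x) (hbz : b ≠ z) (hxz : x ≠ z)
    (Aab : G.Adj a b) (Aax : G.Adj a x) (Aaz : G.Adj a z)
    (Abx : G.Adj b x) (Abz : G.Adj b z) (Axz : ¬ G.Adj x z) :
    4 * mw G x + 7 * ((G.neighborFinset x \ D).card) ≤ 12 := by
  have hNa : G.neighborFinset a = {b, x, z} := nbr_eq_of_three hdeg Aab Aax Aaz hbx hbz hxz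
  have hNb : G.neighborFinset b = {a, x, z} := nbr_eq_of_three hdeg Aab.symm Abx Abz hax haz hxz
  have h2 : 2 ≤ G.degree x := two_le_degree Aax.symm Abx.symm hab
  have h3 : G.degree x ≤ 3 := hdeg x
  by_cases hd : G.degree x = 2
  · have hN : G.neighborFinset x = {a, b} := nbr_eq_of_two hd Aax.symm Abx.symm hab
    have hmw : mw G x = 3 := mw_eq_three hd (E2_pair hN Aab)
    have hsd : G.neighborFinset x \ D = ∅ := by
      rw [Finset.sdiff_eq_empty_iff_subset, hN, hDeq]
      intro t ht; simp at ht ⊢; tauto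
    rw [hmw, hsd]; simp
  · have hd3 : G.degree x = 3 := by omega
    obtain ⟨w, hwa, hwb, hxw, hNx⟩ := third_nbr hd3 Aax.symm Abx.symm hab
    have hwx : w ≠ x := fun h => G.loopless.irrefl x (h ▸ hxw)
    have hwz : w ≠ z := fun h => Axz (h ▸ hxw)
    have hnaw : ¬ G.Adj a w := by
      intro h
      have : w ∈ G.neighborFinset a := by simpa [SimpleGraph.mem_neighborFinset] using h
      rw [hNa] at this; simp at this; tauto
    have hnbw : ¬ G.Adj b w := by
      intro h
      have : w ∈ G.neighborFinset b := by simpa [SimpleGraph.mem_neighborFinset] using h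
      rw [hNb] at this; simp at this; tauto
    have hmw : mw G x = 1 := mw_eq_one hd3 (E2_three_one hNx Aab hnaw hnbw)
    have hsd : G.neighborFinset x \ D = {w} := by
      rw [hNx, hDeq]
      ext t
      simp only [Finset.mem_sdiff, Finset.mem_insert, Finset.mem_singleton]
      constructor
      · rintro ⟨rfl | rfl | rfl, h⟩ <;> tauto
      · rintro rfl
        refine ⟨by tauto, ?_⟩
        push_neg
        refine ⟨?_, ?_, hwx, hwz⟩ <;> intro h <;> subst h <;> tauto
    rw [hmw, hsd]; simp

lemma dia_center_f (hdeg : ∀ v, G.degree v ≤ 3) {D : Finset V}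
    {a b x z : V} (hDeq : D = {a, b, x, z})
    (hab : a ≠ b) (hax : a ≠ x) (haz : a ≠ z) (hbx : b ≠ x) (hbz : b ≠ z) (hxz : x ≠ z)
    (Aab : G.Adj a b) (Aax : G.Adj a x) (Aaz : G.Adj a z)
    (Abx : G.Adj b x) (Abz : G.Adj b z) (Axz : ¬ G.Adj x z) :
    4 * mw G a + 7 * ((G.neighborFinset a \ D).card) ≤ 8 := by
  have hNa : G.neighborFinset a = {b, x, z} := nbr_eq_of_three hdeg Aab Aax Aaz hbx hbz hxz
  have hd3 : G.degree a = 3 := degree_eq_three_of_three hdeg Aab Aax Aaz hbx hbz hxz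
  have hmw : mw G a = 2 := mw_eq_two hd3 (E2_three_two hNa Abx Abz hxz Axz)
  have hsd : G.neighborFinset a \ D = ∅ := by
    rw [Finset.sdiff_eq_empty_iff_subset, hNa, hDeq]
    intro t ht; simp at ht ⊢; tauto
  rw [hmw, hsd]; simp

lemma dia_sum (hdeg : ∀ v, G.degree v ≤ 3) {D : Finset V} (hD : isDia G D) :
    ∑ u ∈ D, (4 * mw G u + 7 * ((G.neighborFinset u \ D).card)) ≤ 14 + 7 * D.card := by
  obtain ⟨a, b, x, z, hDeq, hab, hax, haz, hbx, hbz, hxz, Aab, Aax, Aaz, Abx, Abz, Axz⟩ := hD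
  have hfa := dia_center_f hdeg hDeq hab hax haz hbx hbz hxz Aab Aax Aaz Abx Abz Axz
  have hDeq' : D = {b, a, x, z} := by rw [hDeq]; ext t; simp; tauto
  have hfb := dia_center_f hdeg hDeq' hab.symm hbx hbz hax haz hxz Aab.symm Abx Abz Aax Aaz Axz
  have hfx := dia_pendant_f hdeg hDeq hab hax haz hbx hbz hxz Aab Aax Aaz Abx Abz Axz
  have hDeq'' : D = {a, b, z, x} := by rw [hDeq]; ext t; simp; tauto
  have hfz := dia_pendant_f hdeg hDeq'' hab haz hax hbz hbx (Ne.symm hxz) Aab Aaz Aax Abz Abx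
    (fun h => Axz h.symm)
  have hcard : D.card = 4 := by
    rw [hDeq, Finset.card_insert_of_notMem (by simp [hab, hax, haz]),
      Finset.card_insert_of_notMem (by simp [hbx, hbz]),
      Finset.card_insert_of_notMem (by simp [hxz]), Finset.card_singleton]
  have hsum : ∑ u ∈ D, (4 * mw G u + 7 * ((G.neighborFinset u \ D).card)) =
      (4 * mw G a + 7 * ((G.neighborFinset a \ D).card)) +
      ((4 * mw G b + 7 * ((G.neighborFinset b \ D).card)) +
      ((4 * mw G x + 7 * ((G.neighborFinset x \ D).card)) +
      (4 * mw G z + 7 * ((G.neighborFinset z \ D).card)))) := by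
    rw [hDeq]
    rw [Finset.sum_insert (by simp [hab, hax, haz]),
      Finset.sum_insert (by simp [hbx, hbz]),
      Finset.sum_insert (by simp [hxz]), Finset.sum_singleton]
  rw [hsum, hcard]
  omega

lemma single_vertex_f (hconn : G.Connected) (hdeg : ∀ v, G.degree v ≤ 3)
    (hn : 6 ≤ Fintype.card V) {T : Finset V} (hT : isSingle G T) {v : V} (hv : v ∈ T) :
    (4 * mw G v + 7 * ((G.neighborFinset v \ T).card) ≤ 12) ∧
    (G.degree v ≠ 2 → 4 * mw G v + 7 * ((G.neighborFinset v \ T).card) ≤ 11) := by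
  obtain ⟨y, w, hTeq, h1, h2, h3, a1, a2, a3⟩ := tri_mem_labels hT.1 hv
  have hd2 : 2 ≤ G.degree v := two_le_degree a1 a2 h3
  have hd3 : G.degree v ≤ 3 := hdeg v
  by_cases hd : G.degree v = 2
  · have hN : G.neighborFinset v = {y, w} := nbr_eq_of_two hd a1 a2 h3
    have hmw : mw G v = 3 := mw_eq_three hd (E2_pair hN a3)
    have hsd : G.neighborFinset v \ T = ∅ := by
      rw [Finset.sdiff_eq_empty_iff_subset, hN, hTeq]
      intro t ht; simp at ht ⊢; tauto
    rw [hmw, hsd]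
    exact ⟨by simp, fun h => absurd hd h⟩
  · have hdd : G.degree v = 3 := by omega
    obtain ⟨u, hua, hub, hvu, hNv⟩ := third_nbr hdd a1 a2 h3
    have huv : u ≠ v := fun h => G.loopless.irrefl v (h ▸ hvu)
    have hnyu : ¬ G.Adj y u := by
      intro h
      obtain ⟨D, hD, hvD, hyD, hwD⟩ := shared_edge_diamond hconn hdeg hn a1 a2 a3 hvu h hub.symm
      refine hT.2 D hD ?_
      rw [hTeq]
      intro t ht
      simp only [Finset.mem_insert, Finset.mem_singleton] at ht
      rcases ht with rfl | rfl | rfl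
      exacts [hvD, hyD, hwD]
    have hnwu : ¬ G.Adj w u := by
      intro h
      obtain ⟨D, hD, hvD, hwD, hyD⟩ := shared_edge_diamond hconn hdeg hn a2 a1 a3.symm hvu h
        (Ne.symm hua)
      refine hT.2 D hD ?_
      rw [hTeq]
      intro t ht
      simp only [Finset.mem_insert, Finset.mem_singleton] at ht
      rcases ht with rfl | rfl | rfl
      exacts [hvD, hyD, hwD]
    have hmw : mw G v = 1 := mw_eq_one hdd (E2_three_one hNv a3 hnyu hnwu)
    have hsd : G.neighborFinset v \ T = {u} := by
      rw [hNv, hTeq]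
      ext t
      simp only [Finset.mem_sdiff, Finset.mem_insert, Finset.mem_singleton]
      constructor
      · rintro ⟨rfl | rfl | rfl, h⟩ <;> tauto
      · rintro rfl
        refine ⟨by tauto, ?_⟩
        push_neg
        exact ⟨huv, hua, hub⟩
    rw [hmw, hsd]
    simp

lemma single_sum (hconn : G.Connected) (hdeg : ∀ v, G.degree v ≤ 3)
    (hn : 6 ≤ Fintype.card V) {T : Finset V} (hT : isSingle G T) :
    ∑ u ∈ T, (4 * mw G u + 7 * ((G.neighborFinset u \ T).card)) ≤ 14 + 7 * T.card := by
  obtain ⟨p, q, r, hTeq, h1, h2, h3, a1, a2, a3⟩ := hT.1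
  have hcard : T.card = 3 := by
    rw [hTeq, Finset.card_insert_of_notMem (by simp [h1, h2]),
      Finset.card_insert_of_notMem (by simp [h3]), Finset.card_singleton]
  have hfp := single_vertex_f hconn hdeg hn hT (v := p) (by rw [hTeq]; simp)
  have hfq := single_vertex_f hconn hdeg hn hT (v := q) (by rw [hTeq]; simp)
  have hfr := single_vertex_f hconn hdeg hn hT (v := r) (by rw [hTeq]; simp)
  have hnotall : G.degree p ≠ 2 ∨ G.degree q ≠ 2 ∨ G.degree r ≠ 2 := by
    by_contra h
    push_neg at h
    refine not_all_deg_two hconn hn hT.1 ?_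
    intro v hv
    rw [hTeq] at hv
    simp only [Finset.mem_insert, Finset.mem_singleton] at hv
    rcases hv with rfl | rfl | rfl
    exacts [h.1, h.2.1, h.2.2]
  have hsum : ∑ u ∈ T, (4 * mw G u + 7 * ((G.neighborFinset u \ T).card)) =
      (4 * mw G p + 7 * ((G.neighborFinset p \ T).card)) +
      ((4 * mw G q + 7 * ((G.neighborFinset q \ T).card)) +
      (4 * mw G r + 7 * ((G.neighborFinset r \ T).card))) := by
    rw [hTeq]
    rw [Finset.sum_insert (by simp [h1, h2]), Finset.sum_insert (by simp [h3]),
      Finset.sum_singleton]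
  rw [hsum, hcard]
  rcases hnotall with h | h | h
  · have := hfp.2 h; have := hfq.1; have := hfr.1; omega
  · have := hfq.2 h; have := hfp.1; have := hfr.1; omega
  · have := hfr.2 h; have := hfp.1; have := hfq.1; omega

lemma uncovered_mw {v : V} (hv : ¬ ∃ S, (isDia G S ∨ isSingle G S) ∧ v ∈ S) : mw G v = 0 := by
  by_contra hm
  have hnbrE : nbrE G v ≠ 0 := by
    rw [mw] at hm
    split_ifs at hm <;> omega
  have hE2 : 0 < E2 G v := by
    rw [nbrE_eq] at hnbrE
    omega
  rw [E2, Finset.card_pos] at hE2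
  obtain ⟨⟨x, y⟩, hmem⟩ := hE2
  simp only [Finset.mem_filter, Finset.mem_product, SimpleGraph.mem_neighborFinset] at hmem
  obtain ⟨⟨hvx, hvy⟩, hxy⟩ := hmem
  have hTri : isTri G {v, x, y} := ⟨v, x, y, rfl, hvx.ne, hvy.ne, hxy.ne, hvx, hvy, hxy⟩
  by_cases hD : ∃ D, isDia G D ∧ ({v, x, y} : Finset V) ⊆ D
  · obtain ⟨D, hD, hsub⟩ := hD
    exact hv ⟨D, Or.inl hD, hsub (by simp)⟩
  · push_neg at hD
    exact hv ⟨{v, x, y}, Or.inr ⟨hTri, hD⟩, by simp⟩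


lemma conn_bound {W : Type*} [Fintype W] [DecidableEq W] (H : SimpleGraph W)
    [DecidableRel H.Adj] (h : H.Connected) : Fintype.card W ≤ H.edgeFinset.card + 1 := by
  obtain ⟨r⟩ := h.nonempty
  have hpar : ∀ v : W, v ≠ r → ∃ w, H.Adj v w ∧ H.dist w r < H.dist v r := by
    intro v hv
    have hpos : 0 < H.dist v r := h.pos_dist_of_ne hv
    obtain ⟨p, hp⟩ := h.exists_walk_length_eq_dist v r
    cases p with
    | nil => rw [SimpleGraph.Walk.length_nil] at hp; omega
    | @cons _ w _ hadj q =>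
      refine ⟨w, hadj, ?_⟩
      have hq := SimpleGraph.dist_le q
      rw [SimpleGraph.Walk.length_cons] at hp
      omega
  choose pf hadj hdist using hpar
  classical
  have hcard : (Finset.univ.erase r).card ≤ H.edgeFinset.card := by
    apply Finset.card_le_card_of_injOn (fun v => if h : v ≠ r then s(v, pf v h) else s(r, r))
    · intro v hv
      have hvr : v ≠ r := Finset.ne_of_mem_erase hv
      simp only [Finset.mem_coe, dif_pos hvr]
      rw [SimpleGraph.mem_edgeFinset]
      exact (hadj v hvr : H.Adj v (pf v hvr))
    · intro v1 hv1 v2 hv2 heq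
      have h1 : v1 ≠ r := Finset.ne_of_mem_erase hv1
      have h2 : v2 ≠ r := Finset.ne_of_mem_erase hv2
      simp only [dif_pos h1, dif_pos h2, Sym2.eq_iff] at heq
      rcases heq with ⟨he1, he2⟩ | ⟨he1, he2⟩
      · exact he1
      · have d1 := hdist v1 h1
        have d2 := hdist v2 h2
        rw [← he1] at d2
        rw [he2] at d1
        omega
  rw [Finset.card_erase_of_mem (Finset.mem_univ r), Finset.card_univ] at hcard
  have : 1 ≤ Fintype.card W := Fintype.card_pos_iff.mpr ⟨r⟩
  omega


def objRel (G : SimpleGraph V) : V → V → Prop :=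
  fun u v => u = v ∨ ∃ S : Finset V, (isDia G S ∨ isSingle G S) ∧ u ∈ S ∧ v ∈ S

lemma master_count (hconn : G.Connected) (hdeg : ∀ v, G.degree v ≤ 3)
    (hn : 6 ≤ Fintype.card V) :
    4 * ∑ v, mw G v ≤ 7 * Fintype.card V + 14 := by
  classical
  have hequiv : Equivalence (objRel G) := by
    constructor
    · intro x; exact Or.inl rfl
    · intro x y h
      rcases h with rfl | ⟨S, hS, hx, hy⟩
      exacts [Or.inl rfl, Or.inr ⟨S, hS, hy, hx⟩]
    · intro x y z hxy hyz
      rcases hxy with rfl | ⟨S1, hS1, hx1, hy1⟩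
      · exact hyz
      rcases hyz with rfl | ⟨S2, hS2, hy2, hz2⟩
      · exact Or.inr ⟨S1, hS1, hx1, hy1⟩
      by_cases hSS : S1 = S2
      · exact Or.inr ⟨S1, hS1, hx1, hSS ▸ hz2⟩
      · exact absurd hy2 (Finset.disjoint_left.mp (obj_disjoint hconn hdeg hn hS1 hS2 hSS) hy1)
  let s : Setoid V := ⟨objRel G, hequiv⟩
  letI : DecidableEq (Quotient s) := Classical.decEq _
  letI : Fintype (Quotient s) := Fintype.ofSurjective (Quotient.mk s)
    (fun c => ⟨c.out, Quotient.out_eq c⟩)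
  let Q : SimpleGraph (Quotient s) :=
    { Adj := fun c d => c ≠ d ∧ ∃ v w, Quotient.mk s v = c ∧ Quotient.mk s w = d ∧ G.Adj v w
      symm := by
        constructor
        rintro c d ⟨hne, v, w, hv, hw, hadj⟩
        exact ⟨hne.symm, w, v, hw, hv, hadj.symm⟩
      loopless := by constructor; rintro c ⟨hne, -⟩; exact hne rfl }
  letI : DecidableRel Q.Adj := fun a b => Classical.propDecidable _
  have hQadj : ∀ {c d}, Q.Adj c d ↔ (c ≠ d ∧ ∃ v w, Quotient.mk s v = c ∧ Quotient.mk s w = d ∧ G.Adj v w) := Iff.rfl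
  have hQconn : Q.Connected := by
    have key : ∀ (x y : V) (_ : G.Walk x y),
        Q.Reachable (Quotient.mk s x) (Quotient.mk s y) := by
      intro x y p
      induction p with
      | nil => exact SimpleGraph.Reachable.refl _
      | @cons a b cc hadj q ih =>
        refine SimpleGraph.Reachable.trans ?_ ih
        by_cases he : Quotient.mk s a = Quotient.mk s b
        · rw [he]
        · exact (SimpleGraph.Adj.reachable ⟨he, a, b, rfl, rfl, hadj⟩)
    rw [SimpleGraph.connected_iff]
    refine ⟨?_, ⟨Quotient.mk s (hconn.nonempty.some)⟩⟩
    intro c d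
    rw [← Quotient.out_eq c, ← Quotient.out_eq d]
    obtain ⟨p⟩ := hconn.preconnected c.out d.out
    exact key _ _ p
  let F : Quotient s → Finset V := fun c => Finset.univ.filter (fun v => Quotient.mk s v = c)
  have hfib_covered : ∀ (v : V) (S : Finset V), (isDia G S ∨ isSingle G S) → v ∈ S →
      F (Quotient.mk s v) = S := by
    intro v S hS hvS
    ext w
    simp only [F, Finset.mem_filter, Finset.mem_univ, true_and]
    constructor
    · intro hw
      have hrel : objRel G w v := Quotient.exact hw
      rcases hrel with rfl | ⟨S', hS', hw', hv'⟩
      · exact hvS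
      · by_cases hSS : S' = S
        · exact hSS ▸ hw'
        · exact absurd hvS (Finset.disjoint_left.mp (obj_disjoint hconn hdeg hn hS' hS hSS) hv')
    · intro hw
      exact Quotient.sound (Or.inr ⟨S, hS, hw, hvS⟩)
  have hfib_single : ∀ v : V, (¬ ∃ S, (isDia G S ∨ isSingle G S) ∧ v ∈ S) →
      F (Quotient.mk s v) = {v} := by
    intro v hv
    ext w
    simp only [F, Finset.mem_filter, Finset.mem_univ, true_and, Finset.mem_singleton]
    constructor
    · intro hw
      have hrel : objRel G w v := Quotient.exact hw
      rcases hrel with rfl | ⟨S', hS', hw', hv'⟩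
      · rfl
      · exact absurd ⟨S', hS', hv'⟩ hv
    · rintro rfl; rfl
  have hdegQ : ∀ c : Quotient s,
      Q.degree c ≤ ∑ v ∈ F c, (G.neighborFinset v \ F c).card := by
    intro c
    rw [← SimpleGraph.card_neighborFinset_eq_degree]
    have hcardt : ((F c).biUnion
        (fun v => (G.neighborFinset v \ F c).image (fun w => (v, w)))).card
        = ∑ v ∈ F c, (G.neighborFinset v \ F c).card := by
      rw [Finset.card_biUnion]
      · exact Finset.sum_congr rfl (fun v _ =>
          Finset.card_image_of_injective _ (fun a b hab => by simpa using hab))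
      · intro x hx y hy hxy
        rw [Function.onFun, Finset.disjoint_left]
        rintro ⟨p1, p2⟩ hp hq
        simp only [Finset.mem_image] at hp hq
        obtain ⟨w1, -, he1⟩ := hp
        obtain ⟨w2, -, he2⟩ := hq
        exact hxy ((congrArg Prod.fst he1).trans (congrArg Prod.fst he2).symm)
    rw [← hcardt]
    apply Finset.card_le_card_of_injOn
      (fun d => if h : Q.Adj c d then (h.2.choose, h.2.choose_spec.choose) else (c.out, c.out))
    · intro d hd
      rw [Finset.mem_coe, SimpleGraph.mem_neighborFinset] at hd
      simp only [dif_pos hd, Finset.mem_coe]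
      obtain ⟨hv, hw, hvw⟩ := hd.2.choose_spec.choose_spec
      rw [Finset.mem_biUnion]
      refine ⟨hd.2.choose, ?_, ?_⟩
      · simp only [F, Finset.mem_filter, Finset.mem_univ, true_and]
        exact hv
      · rw [Finset.mem_image]
        refine ⟨hd.2.choose_spec.choose, ?_, rfl⟩
        rw [Finset.mem_sdiff, SimpleGraph.mem_neighborFinset]
        refine ⟨hvw, ?_⟩
        simp only [F, Finset.mem_filter, Finset.mem_univ, true_and]
        rw [hw]
        exact hd.1.symm
    · intro d1 hd1 d2 hd2 heq
      have hd1' : Q.Adj c d1 := (Q.mem_neighborFinset c d1).mp (Finset.mem_coe.mp hd1)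
      have hd2' : Q.Adj c d2 := (Q.mem_neighborFinset c d2).mp (Finset.mem_coe.mp hd2)
      simp only [dif_pos hd1', dif_pos hd2', Prod.mk.injEq] at heq
      have h1 := hd1'.2.choose_spec.choose_spec
      have h2 := hd2'.2.choose_spec.choose_spec
      rw [← h1.2.1, ← h2.2.1, heq.2]
  have hclass : ∀ c : Quotient s,
      4 * (∑ v ∈ F c, mw G v) + 7 * (∑ v ∈ F c, (G.neighborFinset v \ F c).card)
        ≤ 14 + 7 * (F c).card := by
    intro c
    have hc : Quotient.mk s (c.out) = c := Quotient.out_eq c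
    have hsplit : ∀ (S : Finset V),
        4 * (∑ v ∈ S, mw G v) + 7 * (∑ v ∈ S, (G.neighborFinset v \ S).card)
        = ∑ u ∈ S, (4 * mw G u + 7 * ((G.neighborFinset u \ S).card)) := by
      intro S
      rw [Finset.sum_add_distrib, Finset.mul_sum, Finset.mul_sum]
    by_cases hcov : ∃ S, (isDia G S ∨ isSingle G S) ∧ c.out ∈ S
    · obtain ⟨S, hS, hmem⟩ := hcov
      have hF : F c = S := by
        have := hfib_covered _ _ hS hmem
        rwa [hc] at this
      rw [hF, hsplit]
      rcases hS with hS | hS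
      · exact dia_sum hdeg hS
      · exact single_sum hconn hdeg hn hS
    · have hF : F c = {c.out} := by
        have := hfib_single _ hcov
        rwa [hc] at this
      rw [hF]
      rw [Finset.sum_singleton, Finset.sum_singleton, Finset.card_singleton]
      have hmw0 : mw G c.out = 0 := uncovered_mw hcov
      have hb : (G.neighborFinset c.out \ {c.out}).card ≤ 3 := by
        calc (G.neighborFinset c.out \ {c.out}).card ≤ (G.neighborFinset c.out).card :=
          Finset.card_le_card (Finset.sdiff_subset)
        _ = G.degree c.out := SimpleGraph.card_neighborFinset_eq_degree _ _
        _ ≤ 3 := hdeg _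
      omega
  -- global assembly
  have hsum_mw : ∑ c : Quotient s, ∑ v ∈ F c, mw G v = ∑ v, mw G v :=
    Finset.sum_fiberwise_of_maps_to (fun v _ => Finset.mem_univ _) _
  have hcongr : ∀ c : Quotient s, ∑ v ∈ F c, (G.neighborFinset v \ F c).card
      = ∑ v ∈ F c, (G.neighborFinset v \ F (Quotient.mk s v)).card := by
    intro c
    apply Finset.sum_congr rfl
    intro v hv
    simp only [F, Finset.mem_filter, Finset.mem_univ, true_and] at hv
    rw [hv]
  have hsum_g : ∑ c : Quotient s, ∑ v ∈ F c, (G.neighborFinset v \ F (Quotient.mk s v)).card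
      = ∑ v, (G.neighborFinset v \ F (Quotient.mk s v)).card :=
    Finset.sum_fiberwise_of_maps_to (fun v _ => Finset.mem_univ _) _
  have hsum_card : ∑ c : Quotient s, (F c).card = Fintype.card V := by
    calc ∑ c : Quotient s, (F c).card = ∑ c : Quotient s, ∑ _v ∈ F c, (1 : ℕ) :=
        Finset.sum_congr rfl (fun c _ => Finset.card_eq_sum_ones _)
    _ = ∑ _v : V, (1 : ℕ) := Finset.sum_fiberwise_of_maps_to (fun v _ => Finset.mem_univ _) _
    _ = Fintype.card V := by rw [Finset.sum_const, smul_eq_mul, mul_one, Finset.card_univ]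
  have htotal : 4 * (∑ v, mw G v) + 7 * (∑ v, (G.neighborFinset v \ F (Quotient.mk s v)).card)
      ≤ 14 * Fintype.card (Quotient s) + 7 * Fintype.card V := by
    calc 4 * (∑ v, mw G v) + 7 * (∑ v, (G.neighborFinset v \ F (Quotient.mk s v)).card)
        = ∑ c : Quotient s, (4 * (∑ v ∈ F c, mw G v)
          + 7 * (∑ v ∈ F c, (G.neighborFinset v \ F c).card)) := by
          rw [Finset.sum_add_distrib]
          simp_rw [hcongr]
          rw [← Finset.mul_sum, ← Finset.mul_sum, hsum_mw, hsum_g]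
    _ ≤ ∑ _c : Quotient s, (14 : ℕ) + ∑ c : Quotient s, 7 * (F c).card := by
          rw [← Finset.sum_add_distrib]
          exact Finset.sum_le_sum (fun c _ => hclass c)
    _ = 14 * Fintype.card (Quotient s) + 7 * Fintype.card V := by
          rw [Finset.sum_const, ← Finset.mul_sum, hsum_card]
          simp [Finset.card_univ, mul_comm]
  have hQedge : Fintype.card (Quotient s) ≤ Q.edgeFinset.card + 1 := conn_bound Q hQconn
  have hdegsum : ∑ c : Quotient s, Q.degree c = 2 * Q.edgeFinset.card :=
    SimpleGraph.sum_degrees_eq_twice_card_edges Q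
  have hdegle : ∑ c : Quotient s, Q.degree c
      ≤ ∑ v, (G.neighborFinset v \ F (Quotient.mk s v)).card := by
    calc ∑ c : Quotient s, Q.degree c
        ≤ ∑ c : Quotient s, ∑ v ∈ F c, (G.neighborFinset v \ F c).card :=
          Finset.sum_le_sum (fun c _ => hdegQ c)
    _ = _ := by simp_rw [hcongr]; exact hsum_g
  omega


end Aux

/-- A connected subcubic graph of order `n ≥ 6` with `n ≡ 0 (mod 4)` has
clustering coefficient at most `7/12 + 1/(Fintype.card V : ℝ)`. -/
theorem subcubic_clustering_mod0 {V : Type*} [Fintype V] (G : SimpleGraph V)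
    (hconn : G.Connected) (hdeg : ∀ v, deg G v ≤ 3)
    (hn : 6 ≤ Fintype.card V) (hmod : Fintype.card V % 4 = 0) :
    cc G ≤ 7/12 + 1/(Fintype.card V : ℝ) := by
  classical
  letI : DecidableRel G.Adj := Classical.decRel _
  have hdeg' : ∀ v, G.degree v ≤ 3 := fun v => by rw [← deg_eq]; exact hdeg v
  have hM := master_count hconn hdeg' hn
  have hM' : 4 * ∑ v, mw G v ≤ 7 * Fintype.card V + 12 := by omega
  have hn0 : (0:ℝ) < (Fintype.card V : ℝ) := by
    have : 0 < Fintype.card V := by omega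
    exact_mod_cast this
  have hsum : (3 : ℝ) * ∑ u, localCC G u = ((∑ v, mw G v : ℕ) : ℝ) := by
    rw [Finset.mul_sum]
    push_cast
    apply Finset.sum_congr rfl
    intro u _
    rw [mw_cast (by rw [deg_eq]; exact hdeg' u)]
  have hcast : (4:ℝ) * ((∑ v, mw G v : ℕ) : ℝ) ≤ 7 * (Fintype.card V : ℝ) + 12 := by
    exact_mod_cast hM'
  rw [cc, div_le_iff₀ hn0]
  have hexp : (7/12 + 1/(Fintype.card V : ℝ)) * (Fintype.card V : ℝ)
      = 7 * (Fintype.card V : ℝ)/12 + 1 := by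
    field_simp
  rw [hexp]
  linarith

end ClusterCoeff
end

section
/- Let G be a graph, u a vertex of G with degree at least 2, and v a vertex of G not adjacent to u and distinct from u. Then C_u(G + uv) − C_u(G) ≤ 2/(d_G(u)+1), with equality if and only if N_G(u) ⊆ N_G(v) and N_G(u) is an independent set. -/
namespace ClusterCoeff

lemma key (d m t : ℝ) (hd : 2 ≤ d) (hm : 0 ≤ m) (ht : t ≤ d) :
    (m + t) / ((d + 1) * d / 2) - m / (d * (d - 1) / 2) ≤ 2 / (d + 1) ∧
    ((m + t) / ((d + 1) * d / 2) - m / (d * (d - 1) / 2) = 2 / (d + 1) ↔ (t = d ∧ m = 0)) := by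
  have hd0 : (0:ℝ) < d := by linarith
  have hd1 : (0:ℝ) < d + 1 := by linarith
  have hd2 : (0:ℝ) < d - 1 := by linarith
  have hE : (m + t) / ((d + 1) * d / 2) - m / (d * (d - 1) / 2) - 2 / (d + 1)
      = ((t - d) * (d - 1) - 2 * m) * (2 / ((d + 1) * d * (d - 1))) := by
    field_simp
    ring
  have hpos : 0 < 2 / ((d + 1) * d * (d - 1)) := by positivity
  have hnum : (t - d) * (d - 1) - 2 * m ≤ 0 := by nlinarith
  constructor
  · nlinarith
  · constructor
    · intro h
      have h0 : ((t - d) * (d - 1) - 2 * m) * (2 / ((d + 1) * d * (d - 1))) = 0 := by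
        rw [← hE]; linarith
      have h1 : (t - d) * (d - 1) - 2 * m = 0 := by
        rcases mul_eq_zero.mp h0 with h | h
        · exact h
        · exact absurd h (ne_of_gt hpos)
      constructor <;> nlinarith
    · rintro ⟨h1, h2⟩
      have h3 : ((t - d) * (d - 1) - 2 * m) * (2 / ((d + 1) * d * (d - 1))) = 0 := by
        rw [h1, h2]; ring
      linarith [hE]

lemma addEdge_adj {V : Type*} (G : SimpleGraph V) (u v a b : V) :
    (addEdge G u v).Adj a b ↔ a ≠ b ∧ (G.Adj a b ∨ (a = u ∧ b = v) ∨ (a = v ∧ b = u)) :=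
  Iff.rfl

lemma nat_card_pairs {V : Type*} (H : SimpleGraph V) (S : Set V) :
    Nat.card {p : S × S // H.Adj p.1 p.2}
      = Set.ncard {p : V × V | p.1 ∈ S ∧ p.2 ∈ S ∧ H.Adj p.1 p.2} := by
  rw [← Nat.card_coe_set_eq]
  exact Nat.card_congr
    { toFun := fun x => ⟨(x.1.1.1, x.1.2.1), x.1.1.2, x.1.2.2, x.2⟩
      invFun := fun x => ⟨(⟨x.1.1, x.2.1⟩, ⟨x.1.2, x.2.2.1⟩), x.2.2.2⟩
      left_inv := by rintro ⟨⟨⟨a, ha⟩, ⟨b, hb⟩⟩, h⟩; rfl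
      right_inv := by rintro ⟨⟨a, b⟩, h⟩; rfl }


/-- For a vertex `u` of degree at least `2` and a non-adjacent vertex `v`,
adding the edge `uv` increases the clustering coefficient of `u` by at most
`2/(d(u)+1)`, with equality iff `N(u) ⊆ N(v)` and `N(u)` is independent. -/
theorem localCC_addEdge_bound {V : Type*} [Fintype V] (G : SimpleGraph V) (u v : V)
    (hd : 2 ≤ deg G u) (hne : u ≠ v) (hnadj : ¬ G.Adj u v) :
    localCC (addEdge G u v) u - localCC G u ≤ 2 / ((deg G u : ℝ) + 1) ∧
      (localCC (addEdge G u v) u - localCC G u = 2 / ((deg G u : ℝ) + 1) ↔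
        (G.neighborSet u ⊆ G.neighborSet v ∧
          ∀ a ∈ G.neighborSet u, ∀ b ∈ G.neighborSet u, ¬ G.Adj a b)) := by
  classical
  set N : Set V := G.neighborSet u with hNdef
  set T : Set V := G.neighborSet u ∩ G.neighborSet v with hTdef
  set G' : SimpleGraph V := addEdge G u v with hG'def
  have hvN : v ∉ N := hnadj
  -- neighborhood of u in G'
  have hN' : G'.neighborSet u = insert v N := by
    ext w
    constructor
    · intro hw
      rcases (addEdge_adj G u v u w).mp hw with ⟨h0, h | ⟨-, rfl⟩ | ⟨h1, -⟩⟩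
      · exact Set.mem_insert_of_mem _ h
      · exact Set.mem_insert _ _
      · exact absurd h1 hne
    · intro hw
      rcases Set.mem_insert_iff.mp hw with h | h
      · exact (addEdge_adj G u v u w).mpr ⟨fun hu => hne (hu.trans h), Or.inr (Or.inl ⟨rfl, h⟩)⟩
      · exact (addEdge_adj G u v u w).mpr ⟨h.ne, Or.inl h⟩
  -- degree in G'
  have hdN : deg G u = N.ncard := Nat.card_coe_set_eq N
  have hdeg' : deg G' u = deg G u + 1 := by
    unfold deg
    rw [hN', Nat.card_coe_set_eq, Nat.card_coe_set_eq]
    exact Set.ncard_insert_of_notMem hvN N.toFinite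
  -- the pair sets
  set P : Set V → Set (V × V) := fun S => {p : V × V | p.1 ∈ S ∧ p.2 ∈ S ∧ G.Adj p.1 p.2}
    with hPdef
  have hmG : nbrE G u = (P N).ncard / 2 := by
    unfold nbrE; rw [nat_card_pairs]
  have hPeq : {p : V × V | p.1 ∈ G'.neighborSet u ∧ p.2 ∈ G'.neighborSet u ∧ G'.Adj p.1 p.2}
      = P (insert v N) := by
    ext ⟨a, b⟩
    rw [hN']
    simp only [hPdef, Set.mem_setOf_eq]
    constructor
    · rintro ⟨ha, hb, hab⟩
      have hau : a ≠ u := by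
        rcases ha with rfl | ha
        · exact hne.symm
        · exact (SimpleGraph.mem_neighborSet G u a |>.mp ha).ne'
      have hbu : b ≠ u := by
        rcases hb with rfl | hb
        · exact hne.symm
        · exact (SimpleGraph.mem_neighborSet G u b |>.mp hb).ne'
      rcases (addEdge_adj G u v a b).mp hab with ⟨-, h | ⟨rfl, -⟩ | ⟨-, rfl⟩⟩
      · exact ⟨ha, hb, h⟩
      · exact absurd rfl hau
      · exact absurd rfl hbu
    · rintro ⟨ha, hb, hab⟩
      exact ⟨ha, hb, (addEdge_adj G u v a b).mpr ⟨hab.ne, Or.inl hab⟩⟩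
  have hPsplit : P (insert v N)
      = P N ∪ ((fun a => (v, a)) '' T ∪ (fun a => (a, v)) '' T) := by
    ext ⟨a, b⟩
    simp only [hPdef, hTdef, hNdef, Set.mem_setOf_eq, Set.mem_insert_iff, Set.mem_union,
      Set.mem_image, Prod.mk.injEq, Set.mem_inter_iff, SimpleGraph.mem_neighborSet]
    constructor
    · rintro ⟨ha | ha, hb | hb, hab⟩
      · subst ha; subst hb; exact absurd hab (G.irrefl)
      · subst ha
        exact Or.inr (Or.inl ⟨b, ⟨hb, hab⟩, rfl, rfl⟩)
      · subst hb
        exact Or.inr (Or.inr ⟨a, ⟨ha, hab.symm⟩, rfl, rfl⟩)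
      · exact Or.inl ⟨ha, hb, hab⟩
    · rintro (⟨ha, hb, hab⟩ | ⟨x, ⟨hx1, hx2⟩, rfl, rfl⟩ | ⟨x, ⟨hx1, hx2⟩, rfl, rfl⟩)
      · exact ⟨Or.inr ha, Or.inr hb, hab⟩
      · exact ⟨Or.inl rfl, Or.inr hx1, hx2⟩
      · exact ⟨Or.inr hx1, Or.inl rfl, hx2.symm⟩
  have hTN : T ⊆ N := Set.inter_subset_left
  have hdis1 : Disjoint (P N) ((fun a => (v, a)) '' T ∪ (fun a => (a, v)) '' T) := by
    rw [Set.disjoint_left]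
    rintro p ⟨ha, hb, -⟩ (⟨x, -, rfl⟩ | ⟨x, -, rfl⟩)
    · exact hvN ha
    · exact hvN hb
  have hdis2 : Disjoint ((fun a => (v, a)) '' T) ((fun a => (a, v)) '' T) := by
    rw [Set.disjoint_left]
    rintro p ⟨x, -, rfl⟩ ⟨y, hy1, hy⟩
    have h : y = v := congrArg Prod.fst hy
    exact hvN (hTN (h ▸ hy1))
  have hinj1 : Function.Injective (fun a : V => (v, a)) := fun a b h => by
    simpa using h
  have hinj2 : Function.Injective (fun a : V => (a, v)) := fun a b h => by
    simpa using h
  have hncard : (P (insert v N)).ncard = (P N).ncard + (T.ncard + T.ncard) := by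
    rw [hPsplit, Set.ncard_union_eq hdis1 (Set.toFinite _) (Set.toFinite _),
      Set.ncard_union_eq hdis2 (Set.toFinite _) (Set.toFinite _),
      Set.ncard_image_of_injective _ hinj1, Set.ncard_image_of_injective _ hinj2]
  have hnbrE' : nbrE G' u = nbrE G u + T.ncard := by
    unfold nbrE
    rw [nat_card_pairs, nat_card_pairs, hPeq]
    have h5 : {p : V × V | p.1 ∈ N ∧ p.2 ∈ N ∧ G.Adj p.1 p.2} = P N := rfl
    rw [h5, hncard]
    omega
  have htd : T.ncard ≤ deg G u := by
    rw [hdN]; exact Set.ncard_le_ncard hTN N.toFinite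
  -- localCC values
  have hd2' : 2 ≤ deg G' u := by omega
  have hc1 : localCC G u = (nbrE G u : ℝ) / ((deg G u).choose 2) := if_pos hd
  have hc2 : localCC G' u = (nbrE G' u : ℝ) / ((deg G' u).choose 2) := if_pos hd2'
  set D : ℝ := (deg G u : ℝ) with hDdef
  have hD2 : (2:ℝ) ≤ D := by rw [hDdef]; exact_mod_cast hd
  have hch1 : ((deg G u).choose 2 : ℝ) = D * (D - 1) / 2 := Nat.cast_choose_two ℝ _
  have hch2 : ((deg G' u).choose 2 : ℝ) = (D + 1) * D / 2 := by
    rw [hdeg', Nat.cast_choose_two]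
    push_cast
    ring
  have hdiff : localCC G' u - localCC G u
      = ((nbrE G u : ℝ) + T.ncard) / ((D + 1) * D / 2) - (nbrE G u : ℝ) / (D * (D - 1) / 2) := by
    rw [hc1, hc2, hch1, hch2, hnbrE']
    push_cast
    ring_nf
  obtain ⟨hle, hiff⟩ := key D (nbrE G u) T.ncard hD2 (Nat.cast_nonneg _) (by rw [hDdef]; exact_mod_cast htd)
  rw [hdiff]
  refine ⟨hle, hiff.trans ?_⟩
  -- translate the equality conditions
  have e1 : ((T.ncard : ℝ) = D ∧ (nbrE G u : ℝ) = 0) ↔ (T.ncard = deg G u ∧ nbrE G u = 0) := by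
    rw [hDdef]
    constructor
    · rintro ⟨h1, h2⟩; exact ⟨by exact_mod_cast h1, by exact_mod_cast h2⟩
    · rintro ⟨h1, h2⟩; exact ⟨by exact_mod_cast h1, by exact_mod_cast h2⟩
  rw [e1]
  constructor
  · rintro ⟨h1, h2⟩
    constructor
    · -- N ⊆ N(v)
      have hTeq : T = N := Set.eq_of_subset_of_ncard_le hTN (by rw [← hdN, h1]) N.toFinite
      exact Set.inter_eq_left.mp hTeq
    · -- independence
      intro a ha b hb hab
      have hmem1 : (a, b) ∈ P N := ⟨ha, hb, hab⟩
      have hmem2 : (b, a) ∈ P N := ⟨hb, ha, hab.symm⟩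
      have hlt : 1 < (P N).ncard := by
        rw [Set.one_lt_ncard_iff (Set.toFinite _)]
        exact ⟨(a, b), (b, a), hmem1, hmem2, by simp [hab.ne]⟩
      rw [hmG] at h2
      omega
  · rintro ⟨h1, h2⟩
    constructor
    · rw [hTdef, Set.inter_eq_left.mpr h1, hdN]
    · have hPempty : P N = ∅ := by
        ext ⟨a, b⟩
        simp only [hPdef, Set.mem_setOf_eq, Set.mem_empty_iff_false, iff_false, not_and]
        intro ha hb
        exact h2 a ha b hb
      rw [hmG, hPempty, Set.ncard_empty]


end ClusterCoeff
end

section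
/- For n ≥ 4, the complete bipartite graph K_{2,n−2} has clustering coefficient 0, and adding an edge between the two vertices of degree n−2 yields a graph with clustering coefficient 1 − 2/n + 4/(n(n−1)). -/
/-!
`K_{2,m}` is bipartite, hence triangle-free, so every neighbourhood is an independent set and
every local coefficient vanishes. After joining the two vertices of the small side, each of the
`m` other vertices has two adjacent neighbours (local coefficient `1`), while each of the two hubs
sees the other hub together with an independent set of size `m`, all joined to it: `m` edges among
`m + 1` neighbours, local coefficient `2 / (m + 1)`. Averaging over `n = m + 2` vertices gives
`(m + 4 / (m + 1)) / (m + 2) = 1 - 2/n + 4/(n(n-1))`.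
-/

namespace ClusterCoeff

section
variable {V : Type*}

def adjPairs (G : SimpleGraph V) (s : Set V) : Set (V × V) :=
  {q | q.1 ∈ s ∧ q.2 ∈ s ∧ G.Adj q.1 q.2}

variable {G : SimpleGraph V}

lemma nbrE_eq_ncard_adjPairs (u : V) : nbrE G u = (adjPairs G (G.neighborSet u)).ncard / 2 := by
  rw [nbrE, adjPairs, ← Nat.card_coe_set_eq]
  congr 1
  exact Nat.card_congr ⟨fun p => ⟨(p.1.1, p.1.2), p.1.1.2, p.1.2.2, p.2⟩,
    fun q => ⟨(⟨q.1.1, q.2.1⟩, ⟨q.1.2, q.2.2.1⟩), q.2.2.2⟩, fun _ => rfl, fun _ => rfl⟩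

lemma adjPairs_eq_empty_of_isIndepSet {s : Set V} (hs : G.IsIndepSet s) : adjPairs G s = ∅ :=
  Set.eq_empty_of_forall_notMem fun _ ⟨hx, hy, h⟩ => hs hx hy (G.ne_of_adj h) h

lemma localCC_eq_zero_of_cliqueFree (h : G.CliqueFree 3) (u : V) : localCC G u = 0 := by
  simp [localCC, nbrE_eq_ncard_adjPairs,
    adjPairs_eq_empty_of_isIndepSet (G.isIndepSet_neighborSet_of_triangleFree h u)]

lemma cc_eq_zero_of_cliqueFree [Fintype V] (h : G.CliqueFree 3) : cc G = 0 := by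
  simp [cc, localCC_eq_zero_of_cliqueFree h]

lemma ncard_adjPairs_of_isClique {s : Set V} (hs : G.IsClique s) (hfin : s.Finite) :
    (adjPairs G s).ncard = s.ncard * (s.ncard - 1) := by
  have : adjPairs G s = s.offDiag := by
    ext ⟨x, y⟩
    exact ⟨fun ⟨hx, hy, h⟩ => ⟨hx, hy, G.ne_of_adj h⟩, fun ⟨hx, hy, h⟩ => ⟨hx, hy, hs hx hy h⟩⟩
  rw [this, Set.ncard_eq_toFinset_card _ hfin.offDiag, Set.Finite.toFinset_offDiag,
    Finset.offDiag_card, Set.ncard_eq_toFinset_card _ hfin, Nat.mul_sub_one]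

lemma ncard_adjPairs_insert {c : V} {t : Set V} (hct : ∀ x ∈ t, G.Adj c x)
    (ht : G.IsIndepSet t) (hfin : t.Finite) :
    (adjPairs G (insert c t)).ncard = 2 * t.ncard := by
  have hc : c ∉ t := fun h => G.loopless.irrefl c (hct c h)
  have : adjPairs G (insert c t) = {c} ×ˢ t ∪ t ×ˢ {c} := by
    ext ⟨x, y⟩
    simp only [adjPairs, Set.mem_ofPred_eq, Set.mem_insert_iff, Set.mem_union, Set.mem_prod,
      Set.mem_singleton_iff]
    constructor
    · rintro ⟨rfl | hx, rfl | hy, h⟩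
      · exact absurd h (G.loopless.irrefl _)
      · exact Or.inl ⟨rfl, hy⟩
      · exact Or.inr ⟨hx, rfl⟩
      · exact absurd h (ht hx hy (G.ne_of_adj h))
    · rintro (⟨rfl, hy⟩ | ⟨hx, rfl⟩)
      · exact ⟨Or.inl rfl, Or.inr hy, hct y hy⟩
      · exact ⟨Or.inr hx, Or.inl rfl, (hct x hx).symm⟩
  have hdisj : Disjoint ({c} ×ˢ t) (t ×ˢ {c}) :=
    Set.disjoint_left.2 fun q ⟨h1, _⟩ ⟨h2, _⟩ => hc (h1 ▸ h2)
  rw [this, Set.ncard_union_eq hdisj ((Set.finite_singleton c).prod hfin)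
    (hfin.prod (Set.finite_singleton c)), Set.ncard_prod, Set.ncard_prod, Set.ncard_singleton]
  ring

lemma localCC_eq_one_of_isClique {u : V} (h : G.IsClique (G.neighborSet u)) (hd : 2 ≤ deg G u) :
    localCC G u = 1 := by
  have hfin : (G.neighborSet u).Finite := by
    rw [deg, Nat.card_coe_set_eq] at hd
    exact Set.finite_of_ncard_ne_zero (by omega)
  have hE : nbrE G u = (deg G u).choose 2 := by
    rw [nbrE_eq_ncard_adjPairs, ncard_adjPairs_of_isClique h hfin, Nat.choose_two_right, deg,
      Nat.card_coe_set_eq]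
  have hchoose : ((deg G u).choose 2 : ℝ) ≠ 0 := by exact_mod_cast (Nat.choose_pos hd).ne'
  rw [localCC, if_pos hd, hE, div_self hchoose]

lemma localCC_eq_of_neighborSet_eq_insert {u c : V} {t : Set V}
    (hN : G.neighborSet u = insert c t) (hct : ∀ x ∈ t, G.Adj c x) (ht : G.IsIndepSet t)
    (hfin : t.Finite) (hne : t.Nonempty) :
    localCC G u = 2 / (t.ncard + 1) := by
  have hc : c ∉ t := fun h => G.loopless.irrefl c (hct c h)
  have hpos : 0 < t.ncard := (Set.ncard_pos hfin).2 hne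
  have hdeg : deg G u = t.ncard + 1 := by
    rw [deg, Nat.card_coe_set_eq, hN, Set.ncard_insert_of_notMem hc hfin]
  have hE : nbrE G u = t.ncard := by
    rw [nbrE_eq_ncard_adjPairs, hN, ncard_adjPairs_insert hct ht hfin]
    omega
  rw [localCC, if_pos (by omega), hE, hdeg, Nat.cast_choose_two]
  push_cast
  rw [add_sub_cancel_right]
  field_simp

end

/-- The triangular book graph: `|β|` triangles sharing the edge `inl 0 — inl 1`. -/
def bookGraph (β : Type*) : SimpleGraph (Fin 2 ⊕ β) :=
  addEdge (completeBipartiteGraph (Fin 2) β) (Sum.inl 0) (Sum.inl 1)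

section
variable {β : Type*}

lemma bookGraph_adj {x y : Fin 2 ⊕ β} :
    (bookGraph β).Adj x y ↔ x ≠ y ∧ (x.isLeft ∨ y.isLeft) := by
  rcases x with a | b <;> rcases y with a' | b' <;>
    simp [bookGraph, addEdge]
  omega

lemma bookGraph_neighborSet_inr (b : β) :
    (bookGraph β).neighborSet (Sum.inr b) = {Sum.inl 0, Sum.inl 1} := by
  ext (a | b')
  · fin_cases a <;> simp [bookGraph_adj]
  · simp [bookGraph_adj]

lemma bookGraph_neighborSet_inl (a : Fin 2) :
    (bookGraph β).neighborSet (Sum.inl a) = insert (Sum.inl (a + 1)) (Set.range Sum.inr) := by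
  ext (a' | b)
  · fin_cases a <;> fin_cases a' <;> simp [bookGraph_adj]
  · simp [bookGraph_adj]

lemma localCC_bookGraph_inr (b : β) : localCC (bookGraph β) (Sum.inr b) = 1 := by
  apply localCC_eq_one_of_isClique
  · rw [bookGraph_neighborSet_inr]
    exact SimpleGraph.isClique_pair.2 fun h => bookGraph_adj.2 ⟨h, by simp⟩
  · rw [deg, Nat.card_coe_set_eq, bookGraph_neighborSet_inr, Set.ncard_pair (by simp)]

lemma localCC_bookGraph_inl [Finite β] [Nonempty β] (a : Fin 2) :
    localCC (bookGraph β) (Sum.inl a) = 2 / (Nat.card β + 1) := by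
  have hindep : (bookGraph β).IsIndepSet (Set.range Sum.inr) := by
    rintro _ ⟨b, rfl⟩ _ ⟨b', rfl⟩ -
    simp [bookGraph_adj]
  rw [localCC_eq_of_neighborSet_eq_insert (bookGraph_neighborSet_inl a)
    (by simp [bookGraph_adj]) hindep (Set.finite_range _) (Set.range_nonempty _),
    Set.ncard_range_of_injective Sum.inr_injective]

lemma cc_bookGraph [Fintype β] [Nonempty β] :
    cc (bookGraph β) = (4 / (Fintype.card β + 1) + Fintype.card β) / (Fintype.card β + 2) := by
  simp only [cc, Fintype.sum_sum_type, localCC_bookGraph_inl, localCC_bookGraph_inr,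
    Nat.card_eq_fintype_card, Finset.sum_const, Finset.card_univ, Fintype.card_fin,
    Fintype.card_sum, nsmul_eq_mul, mul_one, Nat.cast_add, Nat.cast_ofNat]
  ring

end

/-- For `n ≥ 4`, the complete bipartite graph `K_{2,n-2}` has clustering
coefficient `0`, and adding the edge between the two vertices of degree `n-2` yields a
graph with clustering coefficient `1 - 2/n + 4/(n(n-1))`. -/
theorem completeBipartite_cc (n : ℕ) (hn : 4 ≤ n) :
    cc (completeBipartiteGraph (Fin 2) (Fin (n - 2))) = 0 ∧
      cc (addEdge (completeBipartiteGraph (Fin 2) (Fin (n - 2)))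
          (Sum.inl 0) (Sum.inl 1)) =
        1 - 2 / (n : ℝ) + 4 / ((n : ℝ) * ((n : ℝ) - 1)) := by
  obtain ⟨m, rfl⟩ : ∃ m, n = m + 2 := ⟨n - 2, by omega⟩
  have : Nonempty (Fin m) := Fin.pos_iff_nonempty.1 (by omega)
  refine ⟨cc_eq_zero_of_cliqueFree
    ((SimpleGraph.CompleteBipartiteGraph.bicoloring _ _).colorable.cliqueFree (by simp)), ?_⟩
  refine (cc_bookGraph (β := Fin m)).trans ?_
  simp only [Fintype.card_fin, Nat.cast_add, Nat.cast_ofNat]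
  rw [add_sub_assoc, show (2 : ℝ) - 1 = 1 by norm_num]
  field_simp
  ring

end ClusterCoeff
end

section
/- Let G be a connected subcubic graph of order n ≥ 6 obtained from a tree T of order 2k+2 having k vertices of degree 3 and k+2 leaves, by replacing each leaf of T with a triangle (so n = 4k+6). Then C(G) = 7/12 + 14/(12n). -/
namespace ClusterCoeff

lemma nbrE_of_deg_two {V : Type*} [Fintype V] (G : SimpleGraph V) {v a b : V}
    (hva : G.Adj v a) (hvb : G.Adj v b) (hab : G.Adj a b)
    (h2 : deg G v = 2) : nbrE G v = 1 := by
  have hab' : a ≠ b := hab.ne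
  have hsub : ({a, b} : Set V) ⊆ G.neighborSet v := by
    intro x hx
    simp only [Set.mem_insert_iff, Set.mem_singleton_iff] at hx
    rcases hx with rfl | rfl
    · exact hva
    · exact hvb
  have hNcard : (G.neighborSet v).ncard = 2 := by
    rw [← Nat.card_coe_set_eq]; exact h2
  have hN : G.neighborSet v = {a, b} := by
    refine (Set.eq_of_subset_of_ncard_le hsub ?_ (Set.toFinite _)).symm
    rw [hNcard, Set.ncard_pair hab']
  have key : Nat.card {p : G.neighborSet v × G.neighborSet v // G.Adj p.1 p.2} = 2 := by
    set T := {p : G.neighborSet v × G.neighborSet v // G.Adj p.1 p.2} with hT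
    let φ : T → V × V := fun p => (p.1.1.1, p.1.2.1)
    have hinj : Function.Injective φ := by
      rintro ⟨⟨⟨x, hx⟩, ⟨y, hy⟩⟩, h⟩ ⟨⟨⟨x', hx'⟩, ⟨y', hy'⟩⟩, h'⟩ heq
      simp only [φ, Prod.mk.injEq] at heq
      simp [Subtype.ext_iff, Prod.ext_iff, heq.1, heq.2]
    have hrange : Set.range φ = {(a, b), (b, a)} := by
      ext p
      constructor
      · rintro ⟨⟨⟨⟨x, hx⟩, ⟨y, hy⟩⟩, h⟩, rfl⟩
        have hx' : x = a ∨ x = b := by rw [hN] at hx; simpa using hx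
        have hy' : y = a ∨ y = b := by rw [hN] at hy; simpa using hy
        simp only [Set.mem_insert_iff, Set.mem_singleton_iff]
        rcases hx' with rfl | rfl <;> rcases hy' with rfl | rfl
        · exact absurd h (G.loopless.irrefl _)
        · left; rfl
        · right; rfl
        · exact absurd h (G.loopless.irrefl _)
      · rintro hp
        simp only [Set.mem_insert_iff, Set.mem_singleton_iff] at hp
        rcases hp with rfl | rfl
        · exact ⟨⟨⟨⟨a, hva⟩, ⟨b, hvb⟩⟩, hab⟩, rfl⟩
        · exact ⟨⟨⟨⟨b, hvb⟩, ⟨a, hva⟩⟩, hab.symm⟩, rfl⟩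
    have hrc := Nat.card_range_of_injective hinj
    rw [hrange] at hrc
    rw [← hrc, Nat.card_coe_set_eq, Set.ncard_pair]
    simp [Prod.ext_iff, hab']
  unfold nbrE
  rw [key]

/-- If a connected subcubic graph `G` of order `n = 4k+6 ≥ 6` arises from a
tree with `k` vertices of degree `3` and `k+2` leaves by replacing each leaf with a
pendant triangle — i.e., `G` has a set `W` of `k` vertices of degree `3` lying in no
triangle, every other vertex lies in a triangle and has either degree `2`, or degree `3`
with exactly one edge inside its neighborhood, and there are exactly `2(k+2)` vertices of
degree `2` — then `C(G) = 7/12 + 14/(12n)`. -/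
theorem tree_of_triangles_cc {V : Type*} [Fintype V] (G : SimpleGraph V) (k : ℕ)
    (hconn : G.Connected) (hdeg : ∀ v, deg G v ≤ 3)
    (hn : 6 ≤ Fintype.card V) (hcard : Fintype.card V = 4 * k + 6)
    (W : Finset V) (hW : W.card = k)
    (hWdeg : ∀ v ∈ W, deg G v = 3 ∧ nbrE G v = 0)
    (htri : ∀ v ∉ W, ∃ a b, G.Adj v a ∧ G.Adj v b ∧ G.Adj a b ∧
      (deg G v = 2 ∨ (deg G v = 3 ∧ nbrE G v = 1)))
    (hdeg2 : Nat.card {v : V // deg G v = 2} = 2 * (k + 2)) :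
    cc G = 7 / 12 + 14 / (12 * (Fintype.card V : ℝ)) := by
  classical
  have hWnotin : ∀ v, deg G v = 2 → v ∉ W := by
    intro v hv hvW
    have := (hWdeg v hvW).1
    omega
  set D2 : Finset V := Finset.univ.filter (fun v => deg G v = 2) with hD2
  have hD2card : D2.card = 2 * k + 4 := by
    have h := hdeg2
    rw [Nat.card_eq_fintype_card, Fintype.card_subtype] at h
    have h2 : D2.card = 2 * (k + 2) := by rw [hD2]; convert h using 2
    omega
  have hdisj : Disjoint W D2 := by
    rw [Finset.disjoint_left]
    intro v hvW hvD
    have h1 := (hWdeg v hvW).1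
    have h2 : deg G v = 2 := by simpa [hD2] using hvD
    omega
  set S : Finset V := W ∪ D2 with hS
  have hScard : S.card = 3 * k + 4 := by
    rw [hS, Finset.card_union_of_disjoint hdisj, hW, hD2card]
    omega
  set R : Finset V := Finset.univ \ S with hR
  have hRcard : R.card = k + 2 := by
    rw [hR, Finset.card_sdiff_of_subset (Finset.subset_univ _), Finset.card_univ, hcard, hScard]
    omega
  have hWval : ∀ v ∈ W, localCC G v = 0 := by
    intro v hv
    obtain ⟨hd, he⟩ := hWdeg v hv
    simp [localCC, hd, he]
  have hD2val : ∀ v ∈ D2, localCC G v = 1 := by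
    intro v hv
    have hdv : deg G v = 2 := by simpa [hD2] using hv
    obtain ⟨a, b, h1, h2, h3, _⟩ := htri v (hWnotin v hdv)
    have hne := nbrE_of_deg_two G h1 h2 h3 hdv
    simp [localCC, hdv, hne]
  have hRval : ∀ v ∈ R, localCC G v = 1 / 3 := by
    intro v hv
    rw [hR, Finset.mem_sdiff, hS, Finset.mem_union] at hv
    have hvW : v ∉ W := fun h => hv.2 (Or.inl h)
    have hvD : deg G v ≠ 2 := by
      intro h
      exact hv.2 (Or.inr (by simp [hD2, h]))
    obtain ⟨a, b, h1, h2, h3, hc⟩ := htri v hvW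
    rcases hc with hc | ⟨hd, he⟩
    · exact absurd hc hvD
    · simp [localCC, hd, he]
  have hsum : ∑ u, localCC G u = (2 * k + 4 : ℝ) + (k + 2) / 3 := by
    rw [← Finset.sum_sdiff (Finset.subset_univ S), ← hR]
    have e1 : ∑ u ∈ R, localCC G u = (k + 2 : ℝ) / 3 := by
      rw [Finset.sum_congr rfl hRval, Finset.sum_const, hRcard]
      push_cast
      ring
    have e2 : ∑ u ∈ S, localCC G u = (2 * k + 4 : ℝ) := by
      rw [hS, Finset.sum_union hdisj, Finset.sum_congr rfl hWval,
        Finset.sum_congr rfl hD2val, Finset.sum_const, Finset.sum_const, hD2card]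
      push_cast
      ring
    rw [e1, e2]
    ring
  rw [cc, hsum, hcard]
  have hk : ((4 * k + 6 : ℕ) : ℝ) ≠ 0 := by positivity
  push_cast
  field_simp
  ring


end ClusterCoeff
end

section
/- Let G be a graph, uv an edge of G that lies on some cycle but on no triangle, and let G' = G − uv. Then C(G') ≥ C(G), G' is connected if G is, and if some triangle of G contains u or v then C(G') > C(G). -/
namespace ClusterCoeff

/-! ### Auxiliary lemmas -/

section Aux

variable {V : Type*}

/-- The set of ordered adjacent pairs within the neighborhood of `w`. -/
def EP (G : SimpleGraph V) (w : V) : Set (V × V) :=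
  {p | G.Adj w p.1 ∧ G.Adj w p.2 ∧ G.Adj p.1 p.2}

/-- Equivalence between the subtype used in `nbrE` and `EP`. -/
def epEquiv (G : SimpleGraph V) (w : V) :
    {p : G.neighborSet w × G.neighborSet w // G.Adj p.1 p.2} ≃ EP G w where
  toFun x := ⟨(x.1.1.1, x.1.2.1), x.1.1.2, x.1.2.2, x.2⟩
  invFun y := ⟨(⟨y.1.1, y.2.1⟩, ⟨y.1.2, y.2.2.1⟩), y.2.2.2⟩
  left_inv := fun _ => rfl
  right_inv := fun _ => rfl

lemma nbrE_eq_s19 (G : SimpleGraph V) (w : V) : nbrE G w = (EP G w).ncard / 2 := by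
  unfold nbrE
  congr 1
  rw [← Nat.card_coe_set_eq]
  exact Nat.card_congr (epEquiv G w)

lemma deg_eq_s19 (G : SimpleGraph V) (w : V) : deg G w = (G.neighborSet w).ncard :=
  Nat.card_coe_set_eq _

lemma localCC_nonneg (G : SimpleGraph V) (w : V) : 0 ≤ localCC G w := by
  unfold localCC
  split
  · positivity
  · exact le_refl 0

lemma delEdge_adj (G : SimpleGraph V) (u v a b : V) :
    (delEdge G u v).Adj a b ↔ G.Adj a b ∧ ¬((a = u ∧ b = v) ∨ (a = v ∧ b = u)) := Iff.rfl

lemma delEdge_comm (G : SimpleGraph V) (u v : V) : delEdge G u v = delEdge G v u := by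
  ext a b
  simp only [delEdge_adj]
  tauto

lemma localCC_delEdge_other (G : SimpleGraph V) (u v w : V)
    (hnotri : ∀ x, ¬(G.Adj u x ∧ G.Adj v x)) (hwu : w ≠ u) (hwv : w ≠ v) :
    localCC (delEdge G u v) w = localCC G w := by
  have hN : (delEdge G u v).neighborSet w = G.neighborSet w := by
    ext x
    simp only [SimpleGraph.mem_neighborSet, delEdge_adj]
    constructor
    · exact fun h => h.1
    · intro h
      refine ⟨h, ?_⟩
      rintro (⟨rfl, rfl⟩ | ⟨rfl, rfl⟩)
      · exact hwu rfl
      · exact hwv rfl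
  have hE : EP (delEdge G u v) w = EP G w := by
    ext p
    simp only [EP, Set.mem_setOf_eq, delEdge_adj]
    constructor
    · rintro ⟨⟨h1, _⟩, ⟨h2, _⟩, ⟨h3, _⟩⟩
      exact ⟨h1, h2, h3⟩
    · rintro ⟨h1, h2, h3⟩
      refine ⟨⟨h1, ?_⟩, ⟨h2, ?_⟩, ⟨h3, ?_⟩⟩
      · rintro (⟨rfl, _⟩ | ⟨rfl, _⟩)
        · exact hwu rfl
        · exact hwv rfl
      · rintro (⟨rfl, _⟩ | ⟨rfl, _⟩)
        · exact hwu rfl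
        · exact hwv rfl
      · rintro (⟨rfl, rfl⟩ | ⟨rfl, rfl⟩)
        · exact hnotri w ⟨h1.symm, h2.symm⟩
        · exact hnotri w ⟨h2.symm, h1.symm⟩
  unfold localCC
  rw [nbrE_eq_s19, nbrE_eq_s19, hE, deg_eq_s19, deg_eq_s19, hN]

lemma EP_delEdge_self (G : SimpleGraph V) (u v : V) (hadj : G.Adj u v)
    (hnotri : ∀ x, ¬(G.Adj u x ∧ G.Adj v x)) :
    EP (delEdge G u v) u = EP G u := by
  ext p
  simp only [EP, Set.mem_setOf_eq, delEdge_adj]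
  constructor
  · rintro ⟨⟨h1, _⟩, ⟨h2, _⟩, ⟨h3, _⟩⟩
    exact ⟨h1, h2, h3⟩
  · rintro ⟨h1, h2, h3⟩
    have hp1v : p.1 ≠ v := fun h => hnotri p.2 ⟨h2, h ▸ h3⟩
    have hp2v : p.2 ≠ v := fun h => hnotri p.1 ⟨h1, h ▸ h3.symm⟩
    refine ⟨⟨h1, ?_⟩, ⟨h2, ?_⟩, ⟨h3, ?_⟩⟩
    · rintro (⟨_, rfl⟩ | ⟨rfl, _⟩)
      · exact hp1v rfl
      · exact hadj.ne rfl
    · rintro (⟨_, rfl⟩ | ⟨rfl, _⟩)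
      · exact hp2v rfl
      · exact hadj.ne rfl
    · rintro (⟨rfl, _⟩ | ⟨rfl, _⟩)
      · exact h1.ne rfl
      · exact hp1v rfl

lemma neighborSet_delEdge_self (G : SimpleGraph V) (u v : V) (hadj : G.Adj u v) :
    (delEdge G u v).neighborSet u = G.neighborSet u \ {v} := by
  ext x
  simp only [SimpleGraph.mem_neighborSet, delEdge_adj, Set.mem_diff, Set.mem_singleton_iff]
  have hne : u ≠ v := hadj.ne
  tauto

lemma reachable_delEdge_of_walk (G : SimpleGraph V) (u v : V)
    (hr : (delEdge G u v).Reachable u v) {a b : V} (p : G.Walk a b) :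
    (delEdge G u v).Reachable a b := by
  induction p with
  | nil => exact SimpleGraph.Reachable.refl _
  | @cons x y z h q ih =>
    refine SimpleGraph.Reachable.trans ?_ ih
    by_cases hx : (x = u ∧ y = v) ∨ (x = v ∧ y = u)
    · rcases hx with ⟨rfl, rfl⟩ | ⟨rfl, rfl⟩
      · exact hr
      · exact hr.symm
    · exact SimpleGraph.Adj.reachable ⟨h, hx⟩

variable [Fintype V]

lemma deg_delEdge_self (G : SimpleGraph V) (u v : V) (hadj : G.Adj u v) :
    deg (delEdge G u v) u = deg G u - 1 := by
  rw [deg_eq_s19, deg_eq_s19, neighborSet_delEdge_self G u v hadj,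
    Set.ncard_diff_singleton_of_mem ((SimpleGraph.mem_neighborSet G u v).mpr hadj)]

lemma nbrE_le (G : SimpleGraph V) (u v : V) (hadj : G.Adj u v)
    (hnotri : ∀ x, ¬(G.Adj u x ∧ G.Adj v x)) :
    nbrE G u ≤ (deg G u - 1).choose 2 := by
  classical
  have hsub : EP G u ⊆ Set.offDiag (G.neighborSet u \ {v}) := by
    rintro ⟨a, b⟩ ⟨h1, h2, h3⟩
    have hav : a ≠ v := fun h => hnotri b ⟨h2, h ▸ h3⟩
    have hbv : b ≠ v := fun h => hnotri a ⟨h1, h ▸ h3.symm⟩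
    exact ⟨⟨h1, hav⟩, ⟨h2, hbv⟩, h3.ne⟩
  set s : Set V := G.neighborSet u \ {v} with hs
  have hk : s.ncard = deg G u - 1 := by
    rw [hs, Set.ncard_diff_singleton_of_mem ((SimpleGraph.mem_neighborSet G u v).mpr hadj), deg_eq_s19]
  have hfin : s.Finite := Set.toFinite _
  have hcoe : Set.offDiag s = ↑(hfin.toFinset.offDiag) := by
    rw [Finset.coe_offDiag, Set.Finite.coe_toFinset]
  have hoff : (Set.offDiag s).ncard = s.ncard * s.ncard - s.ncard := by
    rw [hcoe, Set.ncard_coe_finset, Finset.offDiag_card,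
      Set.ncard_eq_toFinset_card' , Set.toFinite_toFinset]
  have hle1 : (EP G u).ncard ≤ (Set.offDiag s).ncard :=
    Set.ncard_le_ncard hsub (Set.toFinite _)
  have hmul : s.ncard * s.ncard - s.ncard = s.ncard * (s.ncard - 1) := by
    cases s.ncard with
    | zero => simp
    | succ n => rw [Nat.succ_sub_one, Nat.mul_succ, Nat.add_sub_cancel]
  rw [nbrE_eq_s19, ← hk, Nat.choose_two_right]
  calc (EP G u).ncard / 2 ≤ (s.ncard * s.ncard - s.ncard) / 2 := by
        rw [← hoff]; exact Nat.div_le_div_right hle1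
    _ = s.ncard * (s.ncard - 1) / 2 := by rw [hmul]

lemma localCC_le_delEdge_self (G : SimpleGraph V) (u v : V) (hadj : G.Adj u v)
    (hnotri : ∀ x, ¬(G.Adj u x ∧ G.Adj v x)) :
    localCC G u ≤ localCC (delEdge G u v) u := by
  have hd' : deg (delEdge G u v) u = deg G u - 1 := deg_delEdge_self G u v hadj
  have hm : nbrE (delEdge G u v) u = nbrE G u := by
    rw [nbrE_eq_s19, nbrE_eq_s19, EP_delEdge_self G u v hadj hnotri]
  have hb : nbrE G u ≤ (deg G u - 1).choose 2 := nbrE_le G u v hadj hnotri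
  unfold localCC
  rw [hd', hm]
  by_cases h2 : 2 ≤ deg G u - 1
  · rw [if_pos h2, if_pos (le_trans h2 (Nat.sub_le _ _))]
    rcases Nat.eq_zero_or_pos (nbrE G u) with h0 | hpos
    · simp [h0]
    · have hc1 : (0 : ℝ) < ((deg G u - 1).choose 2 : ℝ) := by
        exact_mod_cast Nat.choose_pos h2
      have hc2 : (0 : ℝ) < ((deg G u).choose 2 : ℝ) := by
        exact_mod_cast Nat.choose_pos (le_trans h2 (Nat.sub_le _ _))
      have hmono : ((deg G u - 1).choose 2 : ℝ) ≤ ((deg G u).choose 2 : ℝ) := by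
        exact_mod_cast Nat.choose_mono 2 (Nat.sub_le _ _)
      have hm0 : (0 : ℝ) < (nbrE G u : ℝ) := by exact_mod_cast hpos
      exact (div_le_div_iff_of_pos_left hm0 hc2 hc1).mpr hmono
  · rw [if_neg h2]
    by_cases hd2 : 2 ≤ deg G u
    · rw [if_pos hd2]
      have h0 : nbrE G u = 0 := by
        have : (deg G u - 1).choose 2 = 0 :=
          Nat.choose_eq_zero_of_lt (by omega)
        omega
      simp [h0]
    · rw [if_neg hd2]

lemma localCC_lt_delEdge_self (G : SimpleGraph V) (u v : V) (hadj : G.Adj u v)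
    (hnotri : ∀ x, ¬(G.Adj u x ∧ G.Adj v x)) {a b : V}
    (ha : G.Adj u a) (hb : G.Adj u b) (hab : G.Adj a b) :
    localCC G u < localCC (delEdge G u v) u := by
  have hd' : deg (delEdge G u v) u = deg G u - 1 := deg_delEdge_self G u v hadj
  have hm : nbrE (delEdge G u v) u = nbrE G u := by
    rw [nbrE_eq_s19, nbrE_eq_s19, EP_delEdge_self G u v hadj hnotri]
  have hva : v ≠ a := fun h => hnotri b ⟨hb, h ▸ hab⟩
  have hvb : v ≠ b := fun h => hnotri a ⟨ha, h ▸ hab.symm⟩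
  have hd3 : 3 ≤ deg G u := by
    rw [deg_eq_s19]
    have hsub : ({v, a, b} : Set V) ⊆ G.neighborSet u := by
      rintro x (rfl | rfl | rfl)
      · exact hadj
      · exact ha
      · exact hb
    have h3 : ({v, a, b} : Set V).ncard = 3 := by
      rw [Set.ncard_insert_of_notMem (by simp [hva, hvb]) (Set.toFinite _),
        Set.ncard_pair hab.ne]
    calc 3 = ({v, a, b} : Set V).ncard := h3.symm
      _ ≤ (G.neighborSet u).ncard := Set.ncard_le_ncard hsub (Set.toFinite _)
  have hm1 : 1 ≤ nbrE G u := by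
    rw [nbrE_eq_s19]
    have h2 : 2 ≤ (EP G u).ncard := by
      have : 1 < (EP G u).ncard := by
        rw [Set.one_lt_ncard (Set.toFinite _)]
        refine ⟨(a, b), ⟨ha, hb, hab⟩, (b, a), ⟨hb, ha, hab.symm⟩, ?_⟩
        simp only [ne_eq, Prod.mk.injEq, not_and]
        intro h; exact absurd h hab.ne
      omega
    exact (Nat.le_div_iff_mul_le (by norm_num)).mpr (by omega)
  have hchoose : (deg G u - 1).choose 2 < (deg G u).choose 2 := by
    have hrw : deg G u = (deg G u - 1) + 1 := by omega
    calc (deg G u - 1).choose 2 < (deg G u - 1).choose 1 + (deg G u - 1).choose 2 := by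
          rw [Nat.choose_one_right]; omega
      _ = (deg G u).choose 2 := by
          conv_rhs => rw [hrw]
          rw [Nat.choose_succ_succ]
  unfold localCC
  rw [hd', hm, if_pos (by omega : 2 ≤ deg G u - 1), if_pos (by omega : 2 ≤ deg G u)]
  have hc1 : (0 : ℝ) < ((deg G u - 1).choose 2 : ℝ) := by
    exact_mod_cast Nat.choose_pos (by omega)
  have hc2 : (0 : ℝ) < ((deg G u).choose 2 : ℝ) := by
    exact_mod_cast Nat.choose_pos (by omega)
  have hm0 : (0 : ℝ) < (nbrE G u : ℝ) := by exact_mod_cast hm1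
  exact (div_lt_div_iff_of_pos_left hm0 hc2 hc1).mpr (by exact_mod_cast hchoose)

end Aux

/-- If the edge `uv` of `G` lies on some cycle but on no triangle, then
deleting it does not decrease the clustering coefficient, preserves connectedness, and
strictly increases the clustering coefficient if some triangle of `G` contains `u` or
`v`. -/
theorem delete_cycle_edge {V : Type*} [Fintype V] (G : SimpleGraph V) (u v : V)
    (hadj : G.Adj u v)
    (hcyc : ∃ c : G.Walk u u, c.IsCycle ∧ s(u, v) ∈ c.edges)
    (hnotri : ∀ w, ¬(G.Adj u w ∧ G.Adj v w)) :
    cc G ≤ cc (delEdge G u v) ∧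
      (G.Connected → (delEdge G u v).Connected) ∧
      ((∃ a b, (G.Adj u a ∧ G.Adj u b ∧ G.Adj a b) ∨
          (G.Adj v a ∧ G.Adj v b ∧ G.Adj a b)) →
        cc G < cc (delEdge G u v)) := by
  classical
  have hnotri' : ∀ w, ¬(G.Adj v w ∧ G.Adj u w) := fun w h => hnotri w ⟨h.2, h.1⟩
  have hle : ∀ w, localCC G w ≤ localCC (delEdge G u v) w := by
    intro w
    by_cases hwu : w = u
    · subst hwu
      exact localCC_le_delEdge_self G w v hadj hnotri
    by_cases hwv : w = v
    · subst hwv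
      rw [delEdge_comm]
      exact localCC_le_delEdge_self G w u hadj.symm hnotri'
    · rw [localCC_delEdge_other G u v w hnotri hwu hwv]
  have hcard : (0 : ℝ) < (Fintype.card V : ℝ) := by
    exact_mod_cast Fintype.card_pos_iff.mpr ⟨u⟩
  refine ⟨?_, ?_, ?_⟩
  · unfold cc
    exact (div_le_div_iff_of_pos_right hcard).mpr (Finset.sum_le_sum fun i _ => hle i)
  · -- connectedness
    have hGsd : delEdge G u v = G \ SimpleGraph.fromEdgeSet {s(u, v)} := by
      ext a b
      simp only [delEdge_adj, SimpleGraph.sdiff_adj, SimpleGraph.fromEdgeSet_adj,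
        Set.mem_singleton_iff, Sym2.eq_iff]
      constructor
      · rintro ⟨h, hn⟩
        exact ⟨h, fun hc => hn hc.1⟩
      · rintro ⟨h, hn⟩
        exact ⟨h, fun hc => hn ⟨hc, h.ne⟩⟩
    obtain ⟨c, hc, he⟩ := hcyc
    have hreach : (G \ SimpleGraph.fromEdgeSet {s(u, v)}).Reachable u v :=
      (SimpleGraph.adj_and_reachable_delete_edges_iff_exists_cycle.mpr ⟨u, c, hc, he⟩).2
    rw [← hGsd] at hreach
    intro hconn
    have : Nonempty V := ⟨u⟩
    refine SimpleGraph.Connected.mk fun a b => ?_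
    obtain ⟨p⟩ := hconn.preconnected a b
    exact reachable_delEdge_of_walk G u v hreach p
  · rintro ⟨a, b, h | h⟩
    · have hlt : localCC G u < localCC (delEdge G u v) u :=
        localCC_lt_delEdge_self G u v hadj hnotri h.1 h.2.1 h.2.2
      unfold cc
      refine (div_lt_div_iff_of_pos_right hcard).mpr ?_
      exact Finset.sum_lt_sum (fun i _ => hle i) ⟨u, Finset.mem_univ u, hlt⟩
    · have hlt : localCC G v < localCC (delEdge G u v) v := by
        rw [delEdge_comm]
        exact localCC_lt_delEdge_self G v u hadj.symm hnotri' h.1 h.2.1 h.2.2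
      unfold cc
      refine (div_lt_div_iff_of_pos_right hcard).mpr ?_
      exact Finset.sum_lt_sum (fun i _ => hle i) ⟨v, Finset.mem_univ v, hlt⟩

end ClusterCoeff
end
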